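/- arXiv:gr-qc/9511036 — 7 statements merged into one kernel-verified Lean document; each statement's English description precedes it below -/
import Mathlib

section
/- Let m ≥ 0 be an integer. Suppose Ψ models a totally symmetric spinor field with m+1 upper unprimed and m lower primed indices on flat space and satisfies the field equation M'Ψ = 0 identically. Then □^{m+1}Ψ = 0 identically, i.e. applying the wave operator □ (acting in the x-variables) m+1 times to Ψ gives the zero function. (Paper: Proposition 2.1.) -/
/-!
Proposition 2.1: if Ψ models a totally symmetric spinor field with m+1 upper
unprimed and m lower primed indices on flat space (smooth in x, bihomogeneous
polynomial of degrees (m+1, m) in (π, τ)) and satisfies the field equation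
M'Ψ = 0, then □^{m+1}Ψ = 0.
-/

/-- The type of functions modelling spinor fields: `x` real 2×2, `π`, `τ` complex spinors. -/
abbrev SpinField : Type :=
  (Fin 2 → Fin 2 → ℝ) → (Fin 2 → ℂ) → (Fin 2 → ℂ) → ℂ

/-- Partial derivative with respect to the space-time coordinate `x^{AA'}`. -/
noncomputable def dX (A A' : Fin 2) (Ψ : SpinField) : SpinField :=
  fun x π τ =>
    deriv (fun s : ℝ => Ψ (Function.update x A (Function.update (x A) A' s)) π τ) (x A A')

/-- Partial derivative with respect to `π_A`. -/
noncomputable def dPi (A : Fin 2) (Ψ : SpinField) : SpinField :=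
  fun x π τ => deriv (fun s : ℂ => Ψ x (Function.update π A s) τ) (π A)

/-- The field-equation operator `(M'Ψ)(x,π,τ) = Σ_{A,A'} τ_{A'} ∂²Ψ/(∂π_A ∂x^{AA'})`. -/
noncomputable def Mprime (Ψ : SpinField) : SpinField :=
  fun x π τ => ∑ A : Fin 2, ∑ A' : Fin 2, τ A' * dPi A (dX A A' Ψ) x π τ

/-- The flat wave operator `□Ψ = ∂²Ψ/(∂x^{00}∂x^{11}) − ∂²Ψ/(∂x^{01}∂x^{10})`. -/
noncomputable def Box (Ψ : SpinField) : SpinField :=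
  fun x π τ => dX 0 0 (dX 1 1 Ψ) x π τ - dX 0 1 (dX 1 0 Ψ) x π τ

open Finset

namespace Prop21

abbrev XX : Type := Fin 2 → Fin 2 → ℝ
abbrev D : Type := XX → ℂ

def bdir (A A' : Fin 2) : XX := fun i j => if i = A ∧ j = A' then 1 else 0

lemma update_eq (x : XX) (A A' : Fin 2) (s : ℝ) :
    Function.update x A (Function.update (x A) A' s) = x + (s - x A A') • bdir A A' := by
  funext i j
  by_cases hi : i = A
  · subst hi
    by_cases hj : j = A'
    · subst hj; simp [Function.update, bdir]
    · simp [Function.update, bdir, hj]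
  · simp [Function.update, hi, bdir]

noncomputable def pd (A A' : Fin 2) (f : D) : D :=
  fun x => deriv (fun s : ℝ => f (Function.update x A (Function.update (x A) A' s))) (x A A')

lemma hasDerivAt_path (x : XX) (A A' : Fin 2) (s : ℝ) :
    HasDerivAt (fun s : ℝ => x + (s - x A A') • bdir A A') (bdir A A') s := by
  have h : HasDerivAt (fun s : ℝ => s - x A A') 1 s :=
    (hasDerivAt_id s).sub_const _
  simpa using (h.smul_const (bdir A A')).const_add x

lemma hasDerivAt_pd {f : D} (hf : Differentiable ℝ f) (A A' : Fin 2) (x : XX) :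
    HasDerivAt (fun s : ℝ => f (Function.update x A (Function.update (x A) A' s)))
      (fderiv ℝ f x (bdir A A')) (x A A') := by
  have hpath := hasDerivAt_path x A A' (x A A')
  have hF : HasFDerivAt f (fderiv ℝ f x) (x + ((x A A') - x A A') • bdir A A' : XX) := by
    simpa using (hf x).hasFDerivAt
  have h1 := hF.comp_hasDerivAt (x A A') hpath
  have h2 : (f ∘ fun s : ℝ => x + (s - x A A') • bdir A A') =
      (fun s : ℝ => f (Function.update x A (Function.update (x A) A' s))) := by
    funext s; rw [update_eq]; rfl
  rwa [h2] at h1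

lemma pd_eq_fderiv {f : D} (hf : Differentiable ℝ f) (A A' : Fin 2) (x : XX) :
    pd A A' f x = fderiv ℝ f x (bdir A A') :=
  (hasDerivAt_pd hf A A' x).deriv

end Prop21

open scoped ContDiff

namespace Prop21

/-- Smoothness -/
abbrev Sm (f : D) : Prop := ContDiff ℝ ∞ f

lemma infty_succ : (∞ : WithTop ℕ∞) + 1 ≤ ∞ := le_of_eq (show ∞ + 1 = ∞ from rfl)

lemma Sm.diff {f : D} (hf : Sm f) : Differentiable ℝ f :=
  hf.differentiable (by simp)

lemma Sm.fd {f : D} (hf : Sm f) : ContDiff ℝ ∞ (fun y => fderiv ℝ f y) :=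
  hf.fderiv_right infty_succ

lemma Sm.pd {f : D} (hf : Sm f) (A A' : Fin 2) : Sm (Prop21.pd A A' f) := by
  have : Prop21.pd A A' f = fun x => fderiv ℝ f x (bdir A A') := by
    funext x; exact pd_eq_fderiv hf.diff A A' x
  rw [this]
  exact hf.fd.clm_apply contDiff_const

lemma pd_add {f g : D} (hf : Differentiable ℝ f) (hg : Differentiable ℝ g) (A A' : Fin 2) :
    pd A A' (f + g) = pd A A' f + pd A A' g := by
  funext x
  simp only [pd, Pi.add_apply]
  rw [(hasDerivAt_pd hf A A' x).deriv, (hasDerivAt_pd hg A A' x).deriv]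
  exact ((hasDerivAt_pd hf A A' x).add (hasDerivAt_pd hg A A' x)).deriv

lemma pd_smul (α : ℂ) (f : D) (A A' : Fin 2) :
    pd A A' (α • f) = α • pd A A' f := by
  funext x
  simp only [pd, Pi.smul_apply, smul_eq_mul]
  exact deriv_const_mul_field α

lemma pd_zero (A A' : Fin 2) : pd A A' (0 : D) = 0 := by
  funext x; simp [pd]

lemma pd_pd_eq {f : D} (hf : Sm f) (A A' B B' : Fin 2) (x : XX) :
    pd A A' (pd B B' f) x = fderiv ℝ (fderiv ℝ f) x (bdir A A') (bdir B B') := by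
  rw [pd_eq_fderiv (hf.pd B B').diff A A' x]
  have h1 : Prop21.pd B B' f = fun y => fderiv ℝ f y (bdir B B') := by
    funext y; exact pd_eq_fderiv hf.diff B B' y
  rw [h1]
  have hc : DifferentiableAt ℝ (fun y => fderiv ℝ f y) x := (hf.fd.differentiable
    (by simp)) x
  rw [fderiv_clm_apply hc (differentiableAt_const _)]
  simp

lemma pd_comm {f : D} (hf : Sm f) (A A' B B' : Fin 2) :
    pd A A' (pd B B' f) = pd B B' (pd A A' f) := by
  funext x
  rw [pd_pd_eq hf, pd_pd_eq hf]
  exact second_derivative_symmetric (fun y => (hf.diff y).hasFDerivAt)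
    ((hf.fd.differentiable (by simp)) x).hasFDerivAt _ _

end Prop21

namespace Prop21

lemma pd_sub {f g : D} (hf : Differentiable ℝ f) (hg : Differentiable ℝ g) (A A' : Fin 2) :
    pd A A' (f - g) = pd A A' f - pd A A' g := by
  funext x
  simp only [pd, Pi.sub_apply]
  rw [(hasDerivAt_pd hf A A' x).deriv, (hasDerivAt_pd hg A A' x).deriv]
  exact ((hasDerivAt_pd hf A A' x).sub (hasDerivAt_pd hg A A' x)).deriv

lemma pd_comb4 {f g h k : D} (hf : Sm f) (hg : Sm g) (hh : Sm h) (hk : Sm k)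
    (α β γ δ : ℂ) (i j : Fin 2) :
    pd i j (α • f - β • g - γ • h + δ • k)
      = α • pd i j f - β • pd i j g - γ • pd i j h + δ • pd i j k := by
  have h1 : Sm (α • f) := hf.const_smul α
  have h2 : Sm (β • g) := hg.const_smul β
  have h3 : Sm (γ • h) := hh.const_smul γ
  have h4 : Sm (δ • k) := hk.const_smul δ
  have h12 : Sm (α • f - β • g) := h1.sub h2
  have h123 : Sm (α • f - β • g - γ • h) := h12.sub h3
  rw [pd_add h123.diff h4.diff, pd_sub h12.diff h3.diff,
    pd_sub h1.diff h2.diff, pd_smul, pd_smul, pd_smul, pd_smul]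

lemma pd_mcomb {f g h k : D} (hf : Sm f) (hg : Sm g) (hh : Sm h) (hk : Sm k)
    (α β : ℂ) (i j : Fin 2) :
    pd i j (α • (f + g) + β • (h + k))
      = α • (pd i j f + pd i j g) + β • (pd i j h + pd i j k) := by
  have h1 : Sm (α • (f + g)) := (hf.add hg).const_smul α
  have h2 : Sm (β • (h + k)) := (hh.add hk).const_smul β
  rw [pd_add h1.diff h2.diff, pd_smul, pd_smul, pd_add hf.diff hg.diff, pd_add hh.diff hk.diff]

noncomputable def boxc (f : D) : D := pd 0 0 (pd 1 1 f) - pd 0 1 (pd 1 0 f)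

lemma Sm.boxc {f : D} (hf : Sm f) : Sm (Prop21.boxc f) :=
  ((hf.pd 1 1).pd 0 0).sub ((hf.pd 1 0).pd 0 1)

noncomputable def Mc (p : ℤ) (e : ℤ → ℤ → D) : ℤ → ℤ → D := fun a b =>
  ((a + 1 : ℤ) : ℂ) • (pd 0 0 (e (a+1) (b-1)) + pd 0 1 (e (a+1) b)) +
  ((p - a : ℤ) : ℂ) • (pd 1 0 (e a (b-1)) + pd 1 1 (e a b))

noncomputable def Qc (q : ℤ) (e : ℤ → ℤ → D) : ℤ → ℤ → D := fun a b =>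
  ((q - b : ℤ) : ℂ) • pd 0 0 (e a b) - ((b + 1 : ℤ) : ℂ) • pd 0 1 (e a (b+1))
  - ((q - b : ℤ) : ℂ) • pd 1 0 (e (a-1) b) + ((b + 1 : ℤ) : ℂ) • pd 1 1 (e (a-1) (b+1))

lemma Sm_Mc {e : ℤ → ℤ → D} (he : ∀ a b, Sm (e a b)) (p : ℤ) :
    ∀ a b, Sm (Mc p e a b) := by
  intro a b
  unfold Mc
  exact ((((he _ _).pd 0 0).add ((he _ _).pd 0 1)).const_smul ((a+1 : ℤ) : ℂ)).add
    ((((he _ _).pd 1 0).add ((he _ _).pd 1 1)).const_smul ((p-a : ℤ) : ℂ))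

lemma Sm_Qc {e : ℤ → ℤ → D} (he : ∀ a b, Sm (e a b)) (q : ℤ) :
    ∀ a b, Sm (Qc q e a b) := by
  intro a b
  unfold Qc
  exact (((((he _ _).pd 0 0).const_smul ((q-b : ℤ) : ℂ)).sub
    (((he _ _).pd 0 1).const_smul ((b+1 : ℤ) : ℂ))).sub
    (((he _ _).pd 1 0).const_smul ((q-b : ℤ) : ℂ))).add
    (((he _ _).pd 1 1).const_smul ((b+1 : ℤ) : ℂ))

lemma comm_MQ {e : ℤ → ℤ → D} (he : ∀ a b, Sm (e a b)) (p q a b : ℤ) :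
    Mc (p+1) (Qc q e) a b - Qc (q+1) (Mc p e) a b = ((q - p : ℤ) : ℂ) • boxc (e a b) := by
  have hsym : ∀ (α β : ℤ) (x : XX) (v w : XX),
      fderiv ℝ (fderiv ℝ (e α β)) x v w = fderiv ℝ (fderiv ℝ (e α β)) x w v := fun α β x v w =>
    second_derivative_symmetric (fun y => ((he α β).diff y).hasFDerivAt)
      (((he α β).fd.differentiable (by simp)) x).hasFDerivAt _ _
  have hpp : ∀ (i j k l : Fin 2) (α β : ℤ) (x : XX),
      pd i j (pd k l (e α β)) x =
        (fderiv ℝ (fderiv ℝ (e α β)) x (bdir i j) (bdir k l)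
          + fderiv ℝ (fderiv ℝ (e α β)) x (bdir k l) (bdir i j)) / 2 := by
    intro i j k l α β x
    rw [pd_pd_eq (he α β), ← hsym α β x (bdir k l) (bdir i j)]
    ring
  show Mc (p+1) (Qc q e) a b - Qc (q+1) (Mc p e) a b = _
  simp only [Mc, Qc]
  rw [pd_comb4 ((he _ _).pd _ _) ((he _ _).pd _ _) ((he _ _).pd _ _) ((he _ _).pd _ _),
      pd_comb4 ((he _ _).pd _ _) ((he _ _).pd _ _) ((he _ _).pd _ _) ((he _ _).pd _ _),
      pd_comb4 ((he _ _).pd _ _) ((he _ _).pd _ _) ((he _ _).pd _ _) ((he _ _).pd _ _),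
      pd_comb4 ((he _ _).pd _ _) ((he _ _).pd _ _) ((he _ _).pd _ _) ((he _ _).pd _ _),
      pd_mcomb ((he _ _).pd _ _) ((he _ _).pd _ _) ((he _ _).pd _ _) ((he _ _).pd _ _),
      pd_mcomb ((he _ _).pd _ _) ((he _ _).pd _ _) ((he _ _).pd _ _) ((he _ _).pd _ _),
      pd_mcomb ((he _ _).pd _ _) ((he _ _).pd _ _) ((he _ _).pd _ _) ((he _ _).pd _ _),
      pd_mcomb ((he _ _).pd _ _) ((he _ _).pd _ _) ((he _ _).pd _ _) ((he _ _).pd _ _)]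
  funext x
  simp only [boxc, Pi.add_apply, Pi.sub_apply, Pi.smul_apply, smul_eq_mul,
    show ∀ z : ℤ, z - 1 + 1 = z from fun z => by ring,
    show ∀ z : ℤ, z + 1 - 1 = z from fun z => by ring]
  simp only [hpp]
  push_cast
  ring

end Prop21

namespace Prop21

lemma pd_boxc {f : D} (hf : Sm f) (i j : Fin 2) :
    pd i j (boxc f) = boxc (pd i j f) := by
  unfold boxc
  rw [pd_sub ((hf.pd 1 1).pd 0 0).diff ((hf.pd 1 0).pd 0 1).diff,
    pd_comm (hf.pd 1 1) i j 0 0, pd_comm (hf.pd 1 0) i j 0 1,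
    pd_comm hf i j 1 1, pd_comm hf i j 1 0]

lemma boxc_smul (α : ℂ) (f : D) : boxc (α • f) = α • boxc f := by
  unfold boxc
  rw [pd_smul, pd_smul, pd_smul, pd_smul, smul_sub]

lemma boxc_zero : boxc (0 : D) = 0 := by
  unfold boxc; rw [pd_zero, pd_zero, pd_zero, pd_zero, sub_zero]

lemma boxc_add {f g : D} (hf : Sm f) (hg : Sm g) : boxc (f + g) = boxc f + boxc g := by
  unfold boxc
  rw [pd_add hf.diff hg.diff, pd_add hf.diff hg.diff,
    pd_add (hf.pd 1 1).diff (hg.pd 1 1).diff, pd_add (hf.pd 1 0).diff (hg.pd 1 0).diff]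
  abel

lemma boxc_sub {f g : D} (hf : Sm f) (hg : Sm g) : boxc (f - g) = boxc f - boxc g := by
  unfold boxc
  rw [pd_sub hf.diff hg.diff, pd_sub hf.diff hg.diff,
    pd_sub (hf.pd 1 1).diff (hg.pd 1 1).diff, pd_sub (hf.pd 1 0).diff (hg.pd 1 0).diff]
  abel

lemma boxc_Mc {E : ℤ → ℤ → D} (hE : ∀ a b, Sm (E a b)) (p : ℤ) (a b : ℤ) :
    boxc (Mc p E a b) = Mc p (fun a b => boxc (E a b)) a b := by
  simp only [Mc]
  have hA : Sm (((a + 1 : ℤ) : ℂ) • (pd 0 0 (E (a+1) (b-1)) + pd 0 1 (E (a+1) b))) :=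
    (((hE _ _).pd 0 0).add ((hE _ _).pd 0 1)).const_smul ((a + 1 : ℤ) : ℂ)
  have hB : Sm (((p - a : ℤ) : ℂ) • (pd 1 0 (E a (b-1)) + pd 1 1 (E a b))) :=
    (((hE _ _).pd 1 0).add ((hE _ _).pd 1 1)).const_smul ((p - a : ℤ) : ℂ)
  rw [boxc_add hA hB,
    boxc_smul, boxc_smul, boxc_add ((hE _ _).pd 0 0) ((hE _ _).pd 0 1),
    boxc_add ((hE _ _).pd 1 0) ((hE _ _).pd 1 1),
    ← pd_boxc (hE _ _), ← pd_boxc (hE _ _), ← pd_boxc (hE _ _), ← pd_boxc (hE _ _)]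

lemma boxc_Qc {E : ℤ → ℤ → D} (hE : ∀ a b, Sm (E a b)) (q : ℤ) (a b : ℤ) :
    boxc (Qc q E a b) = Qc q (fun a b => boxc (E a b)) a b := by
  simp only [Qc]
  have h1 : Sm (((q - b : ℤ) : ℂ) • pd 0 0 (E a b)) := ((hE _ _).pd 0 0).const_smul ((q - b : ℤ) : ℂ)
  have h2 : Sm (((b + 1 : ℤ) : ℂ) • pd 0 1 (E a (b+1))) :=
    ((hE _ _).pd 0 1).const_smul ((b + 1 : ℤ) : ℂ)
  have h3 : Sm (((q - b : ℤ) : ℂ) • pd 1 0 (E (a-1) b)) :=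
    ((hE _ _).pd 1 0).const_smul ((q - b : ℤ) : ℂ)
  have h4 : Sm (((b + 1 : ℤ) : ℂ) • pd 1 1 (E (a-1) (b+1))) :=
    ((hE _ _).pd 1 1).const_smul ((b + 1 : ℤ) : ℂ)
  have h12 : Sm (((q - b : ℤ) : ℂ) • pd 0 0 (E a b) - ((b + 1 : ℤ) : ℂ) • pd 0 1 (E a (b+1))) :=
    h1.sub h2
  have h123 : Sm (((q - b : ℤ) : ℂ) • pd 0 0 (E a b) - ((b + 1 : ℤ) : ℂ) • pd 0 1 (E a (b+1))
      - ((q - b : ℤ) : ℂ) • pd 1 0 (E (a-1) b)) := h12.sub h3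
  rw [boxc_add h123 h4, boxc_sub h12 h3, boxc_sub h1 h2,
    boxc_smul, boxc_smul, boxc_smul, boxc_smul,
    ← pd_boxc (hE _ _), ← pd_boxc (hE _ _), ← pd_boxc (hE _ _), ← pd_boxc (hE _ _)]

lemma Mc_zero {E : ℤ → ℤ → D} (hE : ∀ a b, E a b = 0) (p : ℤ) (a b : ℤ) :
    Mc p E a b = 0 := by
  simp only [Mc, hE, pd_zero, smul_zero, add_zero]

lemma Qc_zero {E : ℤ → ℤ → D} (hE : ∀ a b, E a b = 0) (q : ℤ) (a b : ℤ) :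
    Qc q E a b = 0 := by
  simp only [Qc, hE, pd_zero, smul_zero, sub_zero, add_zero]

lemma Qc_smul {E : ℤ → ℤ → D} (α : ℂ) (q : ℤ) (a b : ℤ) :
    Qc q (fun a b => α • E a b) a b = α • Qc q E a b := by
  simp only [Qc, pd_smul, smul_sub, smul_add, smul_comm α]

end Prop21

namespace Prop21

noncomputable def iterQ (e0 : ℤ → ℤ → D) (m : ℕ) : ℕ → (ℤ → ℤ → D)
  | 0 => e0
  | (j+1) => Qc ((m : ℤ) - (j : ℤ)) (iterQ e0 m j)

lemma Sm_iterQ {e0 : ℤ → ℤ → D} (he : ∀ a b, Sm (e0 a b)) (m : ℕ) :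
    ∀ j a b, Sm (iterQ e0 m j a b) := by
  intro j
  induction j with
  | zero => exact he
  | succ j ih => exact Sm_Qc ih _

lemma supp_iterQ {e0 : ℤ → ℤ → D} (m : ℕ)
    (hsupp : ∀ a b, (b < 0 ∨ (m : ℤ) < b) → e0 a b = 0) :
    ∀ j a b, (b < 0 ∨ (m : ℤ) - (j : ℕ) < b) → iterQ e0 m j a b = 0 := by
  intro j
  induction j with
  | zero => intro a b hb; exact hsupp a b (by push_cast at hb ⊢; omega)
  | succ j ih =>
    intro a b hb
    show Qc ((m : ℤ) - (j : ℤ)) (iterQ e0 m j) a b = 0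
    rcases hb with hb | hb
    · by_cases hb1 : b = -1
      · subst hb1
        rw [Qc]
        rw [ih a (-1) (Or.inl (by omega)), ih (a-1) (-1) (Or.inl (by omega))]
        norm_num [pd_zero]
      · rw [Qc, ih a b (Or.inl hb), ih (a-1) b (Or.inl hb),
          ih a (b+1) (Or.inl (by omega)), ih (a-1) (b+1) (Or.inl (by omega))]
        simp [pd_zero]
    · -- (m : ℤ) - (j+1) < b
      by_cases hb1 : b = (m : ℤ) - (j : ℤ)
      · subst hb1
        rw [Qc, ih a ((m : ℤ) - (j : ℤ) + 1) (Or.inr (by omega)),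
          ih (a-1) ((m : ℤ) - (j : ℤ) + 1) (Or.inr (by omega))]
        simp [pd_zero, sub_self]
      · rw [Qc, ih a b (Or.inr (by push_cast at hb ⊢; omega)),
          ih (a-1) b (Or.inr (by push_cast at hb ⊢; omega)),
          ih a (b+1) (Or.inr (by push_cast at hb ⊢; omega)),
          ih (a-1) (b+1) (Or.inr (by push_cast at hb ⊢; omega))]
        simp [pd_zero]

end Prop21

namespace Prop21

lemma boxc_iter_smul (α : ℂ) (f : D) (k : ℕ) : boxc^[k] (α • f) = α • boxc^[k] f := by
  induction k generalizing f with
  | zero => simp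
  | succ k ih => rw [Function.iterate_succ_apply, Function.iterate_succ_apply, boxc_smul, ih]

lemma boxc_iter_zero (k : ℕ) : boxc^[k] (0 : D) = 0 := by
  induction k with
  | zero => simp
  | succ k ih => rw [Function.iterate_succ_apply, boxc_zero, ih]

lemma Sm_boxc_iter {f : D} (hf : Sm f) (k : ℕ) : Sm (boxc^[k] f) := by
  induction k generalizing f with
  | zero => exact hf
  | succ k ih => rw [Function.iterate_succ_apply]; exact ih hf.boxc

lemma boxc_iter_Mc {E : ℤ → ℤ → D} (hE : ∀ a b, Sm (E a b)) (p : ℤ) (k : ℕ) (a b : ℤ) :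
    boxc^[k] (Mc p E a b) = Mc p (fun a b => boxc^[k] (E a b)) a b := by
  induction k generalizing E with
  | zero => simp
  | succ k ih =>
    rw [Function.iterate_succ_apply, boxc_Mc hE, ih (fun a b => (hE a b).boxc)]
    simp only [← Function.iterate_succ_apply]

lemma S_rel {e0 : ℤ → ℤ → D} (he : ∀ a b, Sm (e0 a b)) (m : ℕ)
    (h0 : ∀ a b, Mc ((m : ℤ) + 1) e0 a b = 0) :
    ∀ (j : ℕ) (a b : ℤ), Mc ((m : ℤ) + 2 + (j : ℤ)) (iterQ e0 m (j+1)) a b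
      = ((-((j : ℤ) + 1)^2 : ℤ) : ℂ) • boxc (iterQ e0 m j a b) := by
  intro j
  induction j with
  | zero =>
    intro a b
    have hz : Qc ((m : ℤ) - ((0:ℕ) : ℤ) + 1) (Mc ((m : ℤ) + 1) e0) a b = 0 := Qc_zero h0 _ a b
    have hcomm := comm_MQ he ((m : ℤ) + 1) ((m : ℤ) - ((0:ℕ) : ℤ)) a b
    rw [hz, sub_zero] at hcomm
    have h1 : iterQ e0 m 1 = Qc ((m : ℤ) - ((0:ℕ) : ℤ)) e0 := rfl
    have h2 : iterQ e0 m 0 = e0 := rfl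
    rw [h1, h2, show (m : ℤ) + 2 + ((0:ℕ) : ℤ) = (m : ℤ) + 1 + 1 by push_cast; ring, hcomm,
      show ((m : ℤ) - ((0:ℕ) : ℤ) - ((m : ℤ) + 1) : ℤ) = (-(((0:ℕ) : ℤ) + 1)^2 : ℤ) by
        push_cast; ring]
  | succ j ih =>
    intro a b
    have hfam : Mc ((m : ℤ) + 2 + (j : ℤ)) (iterQ e0 m (j+1))
        = fun a b => ((-((j : ℤ) + 1)^2 : ℤ) : ℂ) • boxc (iterQ e0 m j a b) :=
      funext fun a => funext fun b => ih a b
    have hcomm := comm_MQ (Sm_iterQ he m (j+1)) ((m : ℤ) + 2 + (j : ℤ))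
      ((m : ℤ) - ((j+1 : ℕ) : ℤ)) a b
    rw [hfam] at hcomm
    rw [show (m : ℤ) - ((j+1 : ℕ) : ℤ) + 1 = (m : ℤ) - (j : ℤ) by push_cast; ring] at hcomm
    rw [Qc_smul] at hcomm
    rw [← boxc_Qc (Sm_iterQ he m j) ((m : ℤ) - (j : ℤ)) a b] at hcomm
    have h1 : iterQ e0 m (j+1) = Qc ((m : ℤ) - (j : ℤ)) (iterQ e0 m j) := rfl
    rw [← h1] at hcomm
    have h2 : iterQ e0 m (j+1+1) = Qc ((m : ℤ) - ((j+1 : ℕ) : ℤ)) (iterQ e0 m (j+1)) := rfl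
    rw [h2, show (m : ℤ) + 2 + ((j+1 : ℕ) : ℤ) = (m : ℤ) + 2 + (j : ℤ) + 1 by push_cast; ring]
    rw [sub_eq_iff_eq_add] at hcomm
    rw [hcomm, ← add_smul,
      show (((m : ℤ) - ((j+1 : ℕ) : ℤ) - ((m : ℤ) + 2 + (j : ℤ)) : ℤ) : ℂ)
          + ((-((j : ℤ) + 1)^2 : ℤ) : ℂ) = ((-(((j+1 : ℕ) : ℤ) + 1)^2 : ℤ) : ℂ) by
        push_cast; ring]

lemma coeff_main {e0 : ℤ → ℤ → D} (he : ∀ a b, Sm (e0 a b)) (m : ℕ)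
    (h0 : ∀ a b, Mc ((m : ℤ) + 1) e0 a b = 0)
    (hsupp : ∀ a b, (b < 0 ∨ (m : ℤ) < b) → e0 a b = 0) :
    ∀ a b, boxc^[m+1] (e0 a b) = 0 := by
  have key : ∀ k, k ≤ m + 1 → ∀ a b, boxc^[k] (iterQ e0 m (m+1-k) a b) = 0 := by
    intro k
    induction k with
    | zero =>
      intro _ a b
      simpa using supp_iterQ m hsupp (m+1) a b (by push_cast; omega)
    | succ k ih =>
      intro hk a b
      have hik : m + 1 - k = (m - k) + 1 := by omega
      have hzero : ∀ a b, boxc^[k] (iterQ e0 m ((m-k) + 1) a b) = 0 := by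
        intro a b
        have := ih (by omega) a b
        rwa [hik] at this
      have hS := S_rel he m h0 (m-k) a b
      have happ := congrArg (fun f => boxc^[k] f) hS
      rw [boxc_iter_Mc (Sm_iterQ he m ((m-k)+1)) _ k a b] at happ
      rw [Mc_zero hzero] at happ
      rw [boxc_iter_smul, ← Function.iterate_succ_apply] at happ
      have hγ : ((-(((m-k : ℕ) : ℤ) + 1)^2 : ℤ) : ℂ) ≠ 0 := by
        rw [Int.cast_ne_zero]
        have : ((m-k : ℕ) : ℤ) + 1 ≠ 0 := by omega
        simpa using pow_ne_zero 2 this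
      have := (smul_eq_zero.mp happ.symm).resolve_left hγ
      have hik2 : m + 1 - (k+1) = m - k := by omega
      rwa [hik2]
  have := key (m+1) le_rfl
  simpa [iterQ] using this

end Prop21

namespace Prop21


/-- The spin field built from a coefficient family. -/
noncomputable def polyfield (m : ℕ) (cc : ℕ → ℕ → D) :
    SpinField := fun x π τ =>
  ∑ k ∈ Finset.range (m+2), ∑ k' ∈ Finset.range (m+1),
    cc k k' x * (π 0)^k * (π 1)^(m+1-k) * (τ 0)^k' * (τ 1)^(m-k')

lemma hasDerivAt_polyfield_x (m : ℕ) (cc : ℕ → ℕ → D) (hcc : ∀ k k', Sm (cc k k'))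
    (A A' : Fin 2) (x : XX) (π τ : Fin 2 → ℂ) :
    HasDerivAt (fun s : ℝ =>
        polyfield m cc (Function.update x A (Function.update (x A) A' s)) π τ)
      (polyfield m (fun k k' => pd A A' (cc k k')) x π τ) (x A A') := by
  unfold polyfield
  apply HasDerivAt.fun_sum
  intro k _
  apply HasDerivAt.fun_sum
  intro k' _
  have h := hasDerivAt_pd (hcc k k').diff A A' x
  rw [← pd_eq_fderiv (hcc k k').diff A A' x] at h
  exact ((((h.mul_const _).mul_const _).mul_const _).mul_const _)

lemma dX_polyfield (m : ℕ) (cc : ℕ → ℕ → D) (hcc : ∀ k k', Sm (cc k k')) (A A' : Fin 2) :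
    dX A A' (polyfield m cc) = polyfield m (fun k k' => pd A A' (cc k k')) := by
  funext x π τ
  exact (hasDerivAt_polyfield_x m cc hcc A A' x π τ).deriv

lemma Box_polyfield (m : ℕ) (cc : ℕ → ℕ → D) (hcc : ∀ k k', Sm (cc k k')) :
    Box (polyfield m cc) = polyfield m (fun k k' => boxc (cc k k')) := by
  funext x π τ
  unfold Box
  rw [dX_polyfield m cc hcc 1 1, dX_polyfield m _ (fun k k' => (hcc k k').pd 1 1) 0 0,
    dX_polyfield m cc hcc 1 0, dX_polyfield m _ (fun k k' => (hcc k k').pd 1 0) 0 1]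
  unfold polyfield boxc
  rw [← Finset.sum_sub_distrib]
  refine Finset.sum_congr rfl fun k _ => ?_
  rw [← Finset.sum_sub_distrib]
  refine Finset.sum_congr rfl fun k' _ => ?_
  simp only [Pi.sub_apply]
  ring

lemma Box_iter_polyfield (m : ℕ) (cc : ℕ → ℕ → D) (hcc : ∀ k k', Sm (cc k k')) (n : ℕ) :
    Box^[n] (polyfield m cc) = polyfield m (fun k k' => boxc^[n] (cc k k')) := by
  induction n generalizing cc with
  | zero => simp [polyfield]
  | succ n ih =>
    rw [Function.iterate_succ_apply, Box_polyfield m cc hcc,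
      ih (fun k k' => boxc (cc k k')) (fun k k' => (hcc k k').boxc)]
    simp only [← Function.iterate_succ_apply]


end Prop21

namespace Prop21

lemma dPi0_polyfield (m : ℕ) (F : ℕ → ℕ → D) (x : XX) (π τ : Fin 2 → ℂ) :
    dPi 0 (polyfield m F) x π τ
      = ∑ k ∈ Finset.range (m+2), ∑ k' ∈ Finset.range (m+1),
          F k k' x * ((k : ℂ) * (π 0)^(k-1)) * (π 1)^(m+1-k) * (τ 0)^k' * (τ 1)^(m-k') := by
  unfold dPi
  have heq : (fun s : ℂ => polyfield m F x (Function.update π 0 s) τ)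
      = fun s : ℂ => ∑ k ∈ Finset.range (m+2), ∑ k' ∈ Finset.range (m+1),
          F k k' x * s^k * (π 1)^(m+1-k) * (τ 0)^k' * (τ 1)^(m-k') := by
    funext s
    unfold polyfield
    simp [Function.update_of_ne (show (1 : Fin 2) ≠ 0 by decide)]
  rw [heq]
  refine HasDerivAt.deriv ?_
  apply HasDerivAt.fun_sum
  intro k _
  apply HasDerivAt.fun_sum
  intro k' _
  exact ((((hasDerivAt_pow k (π 0)).const_mul (F k k' x)).mul_const _).mul_const _).mul_const _

lemma dPi1_polyfield (m : ℕ) (F : ℕ → ℕ → D) (x : XX) (π τ : Fin 2 → ℂ) :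
    dPi 1 (polyfield m F) x π τ
      = ∑ k ∈ Finset.range (m+2), ∑ k' ∈ Finset.range (m+1),
          F k k' x * (π 0)^k * (((m+1-k : ℕ) : ℂ) * (π 1)^(m+1-k-1))
            * (τ 0)^k' * (τ 1)^(m-k') := by
  unfold dPi
  have heq : (fun s : ℂ => polyfield m F x (Function.update π 1 s) τ)
      = fun s : ℂ => ∑ k ∈ Finset.range (m+2), ∑ k' ∈ Finset.range (m+1),
          F k k' x * (π 0)^k * s^(m+1-k) * (τ 0)^k' * (τ 1)^(m-k') := by
    funext s
    unfold polyfield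
    simp [Function.update_of_ne (show (0 : Fin 2) ≠ 1 by decide)]
  rw [heq]
  refine HasDerivAt.deriv ?_
  apply HasDerivAt.fun_sum
  intro k _
  apply HasDerivAt.fun_sum
  intro k' _
  exact (((hasDerivAt_pow (m+1-k) (π 1)).const_mul (F k k' x * (π 0)^k)).mul_const _).mul_const _

lemma Mprime_eval (m : ℕ) (cc : ℕ → ℕ → D) (hcc : ∀ k k', Sm (cc k k'))
    (x : XX) (s t : ℂ) :
    Mprime (polyfield m cc) x ![s,1] ![t,1]
      = t * (∑ k ∈ Finset.range (m+2), ∑ k' ∈ Finset.range (m+1),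
            pd 0 0 (cc k k') x * ((k : ℂ) * s^(k-1)) * t^k')
        + (∑ k ∈ Finset.range (m+2), ∑ k' ∈ Finset.range (m+1),
            pd 0 1 (cc k k') x * ((k : ℂ) * s^(k-1)) * t^k')
        + (t * (∑ k ∈ Finset.range (m+2), ∑ k' ∈ Finset.range (m+1),
            pd 1 0 (cc k k') x * (((m+1-k : ℕ) : ℂ) * s^k) * t^k')
        + (∑ k ∈ Finset.range (m+2), ∑ k' ∈ Finset.range (m+1),
            pd 1 1 (cc k k') x * (((m+1-k : ℕ) : ℂ) * s^k) * t^k')) := by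
  unfold Mprime
  rw [Fin.sum_univ_two]
  rw [Fin.sum_univ_two, Fin.sum_univ_two]
  rw [dX_polyfield m cc hcc 0 0, dX_polyfield m cc hcc 0 1,
    dX_polyfield m cc hcc 1 0, dX_polyfield m cc hcc 1 1]
  rw [dPi0_polyfield, dPi0_polyfield, dPi1_polyfield, dPi1_polyfield]
  simp only [Matrix.cons_val_zero, Matrix.cons_val_one, Matrix.head_cons, one_pow,
    mul_one, one_mul]
  have h3 : (∑ k ∈ Finset.range (m+2), ∑ k' ∈ Finset.range (m+1),
        pd 1 0 (cc k k') x * s^k * ((m+1-k : ℕ) : ℂ) * t^k')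
      = ∑ k ∈ Finset.range (m+2), ∑ k' ∈ Finset.range (m+1),
        pd 1 0 (cc k k') x * (((m+1-k : ℕ) : ℂ) * s^k) * t^k' :=
    Finset.sum_congr rfl fun k _ => Finset.sum_congr rfl fun k' _ => by ring
  have h4 : (∑ k ∈ Finset.range (m+2), ∑ k' ∈ Finset.range (m+1),
        pd 1 1 (cc k k') x * s^k * ((m+1-k : ℕ) : ℂ) * t^k')
      = ∑ k ∈ Finset.range (m+2), ∑ k' ∈ Finset.range (m+1),
        pd 1 1 (cc k k') x * (((m+1-k : ℕ) : ℂ) * s^k) * t^k' :=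
    Finset.sum_congr rfl fun k _ => Finset.sum_congr rfl fun k' _ => by ring
  rw [h3, h4]

end Prop21

namespace Prop21

noncomputable def ezF (m : ℕ) (cc : ℕ → ℕ → D) : ℤ → ℤ → D := fun a b =>
  if 0 ≤ a ∧ a ≤ (m : ℤ)+1 ∧ 0 ≤ b ∧ b ≤ (m : ℤ) then cc a.toNat b.toNat else 0

lemma ezF_pos (m : ℕ) (cc : ℕ → ℕ → D) {a b : ℤ}
    (h : 0 ≤ a ∧ a ≤ (m : ℤ)+1 ∧ 0 ≤ b ∧ b ≤ (m : ℤ)) :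
    ezF m cc a b = cc a.toNat b.toNat := if_pos h

lemma ezF_neg (m : ℕ) (cc : ℕ → ℕ → D) {a b : ℤ}
    (h : ¬(0 ≤ a ∧ a ≤ (m : ℤ)+1 ∧ 0 ≤ b ∧ b ≤ (m : ℤ))) :
    ezF m cc a b = 0 := if_neg h

lemma ezF_entry (m : ℕ) (cc : ℕ → ℕ → D) {a b : ℕ} (ha : a ≤ m+1) (hb : b ≤ m) :
    ezF m cc (a : ℤ) (b : ℤ) = cc a b := by
  rw [ezF_pos m cc ⟨by omega, by omega, by omega, by omega⟩]
  simp

end Prop21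



lemma coeff_ext1 {N : ℕ} (g : ℕ → ℂ) (h : ∀ z : ℂ, ∑ a ∈ Finset.range N, g a * z ^ a = 0) :
    ∀ a, a < N → g a = 0 := by
  intro a ha
  have hp : (∑ i ∈ Finset.range N, Polynomial.C (g i) * Polynomial.X ^ i : Polynomial ℂ) = 0 := by
    apply Polynomial.zero_of_eval_zero
    intro z
    rw [Polynomial.eval_finset_sum]
    simpa using h z
  have := congrArg (fun p => Polynomial.coeff p a) hp
  simpa [Polynomial.finset_sum_coeff, Polynomial.coeff_C_mul, Polynomial.coeff_X_pow,
    Finset.sum_ite_eq' (Finset.range N), ha] using this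

lemma coeff_ext2 {N M : ℕ} (R : ℕ → ℕ → ℂ)
    (h : ∀ s t : ℂ, ∑ a ∈ Finset.range N, ∑ b ∈ Finset.range M, R a b * s ^ a * t ^ b = 0) :
    ∀ a b, a < N → b < M → R a b = 0 := by
  intro a b ha hb
  have h1 : ∀ s : ℂ, ∀ b, b < M → ∑ a ∈ Finset.range N, R a b * s ^ a = 0 := by
    intro s
    apply coeff_ext1 (fun b => ∑ a ∈ Finset.range N, R a b * s ^ a)
    intro t
    rw [← h s t, Finset.sum_comm]
    refine Finset.sum_congr rfl fun b _ => ?_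
    rw [Finset.sum_mul]
  exact coeff_ext1 (fun a => R a b) (fun s => h1 s b hb) a ha



lemma reindex_main (m : ℕ) (g1 g2 g3 g4 : ℕ → ℕ → ℂ) (s t : ℂ) :
    t * (∑ k ∈ Finset.range (m+2), ∑ k' ∈ Finset.range (m+1),
          g1 k k' * ((k : ℂ) * s^(k-1)) * t^k')
    + (∑ k ∈ Finset.range (m+2), ∑ k' ∈ Finset.range (m+1),
          g2 k k' * ((k : ℂ) * s^(k-1)) * t^k')
    + (t * (∑ k ∈ Finset.range (m+2), ∑ k' ∈ Finset.range (m+1),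
          g3 k k' * (((m+1-k : ℕ) : ℂ) * s^k) * t^k')
    + (∑ k ∈ Finset.range (m+2), ∑ k' ∈ Finset.range (m+1),
          g4 k k' * (((m+1-k : ℕ) : ℂ) * s^k) * t^k'))
    = ∑ a ∈ Finset.range (m+1), ∑ b ∈ Finset.range (m+2),
        ((if 1 ≤ b then ((a+1 : ℕ) : ℂ) * g1 (a+1) (b-1) + ((m+1-a : ℕ) : ℂ) * g3 a (b-1) else 0)
         + (if b ≤ m then ((a+1 : ℕ) : ℂ) * g2 (a+1) b + ((m+1-a : ℕ) : ℂ) * g4 a b else 0))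
          * s^a * t^b := by
  -- LHS: reindex the k-sums
  have hA : ∀ (g : ℕ → ℕ → ℂ),
      (∑ k ∈ Finset.range (m+2), ∑ k' ∈ Finset.range (m+1),
          g k k' * ((k : ℂ) * s^(k-1)) * t^k')
        = ∑ a ∈ Finset.range (m+1), ∑ k' ∈ Finset.range (m+1),
            g (a+1) k' * (((a+1 : ℕ) : ℂ) * s^a) * t^k' := by
    intro g
    rw [Finset.sum_range_succ']
    simp
  have hB : ∀ (g : ℕ → ℕ → ℂ),
      (∑ k ∈ Finset.range (m+2), ∑ k' ∈ Finset.range (m+1),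
          g k k' * (((m+1-k : ℕ) : ℂ) * s^k) * t^k')
        = ∑ a ∈ Finset.range (m+1), ∑ k' ∈ Finset.range (m+1),
            g a k' * (((m+1-a : ℕ) : ℂ) * s^a) * t^k' := by
    intro g
    rw [Finset.sum_range_succ]
    simp
  rw [hA g1, hA g2, hB g3, hB g4]
  -- RHS: split the b-sum
  have hR : ∀ a : ℕ, (∑ b ∈ Finset.range (m+2),
        ((if 1 ≤ b then ((a+1 : ℕ) : ℂ) * g1 (a+1) (b-1) + ((m+1-a : ℕ) : ℂ) * g3 a (b-1) else 0)
         + (if b ≤ m then ((a+1 : ℕ) : ℂ) * g2 (a+1) b + ((m+1-a : ℕ) : ℂ) * g4 a b else 0))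
          * s^a * t^b)
      = (∑ i ∈ Finset.range (m+1),
          (((a+1 : ℕ) : ℂ) * g1 (a+1) i + ((m+1-a : ℕ) : ℂ) * g3 a i) * s^a * t^(i+1))
        + ∑ b ∈ Finset.range (m+1),
          (((a+1 : ℕ) : ℂ) * g2 (a+1) b + ((m+1-a : ℕ) : ℂ) * g4 a b) * s^a * t^b := by
    intro a
    have hsplit : ∀ b ∈ Finset.range (m+2),
        ((if 1 ≤ b then ((a+1 : ℕ) : ℂ) * g1 (a+1) (b-1) + ((m+1-a : ℕ) : ℂ) * g3 a (b-1) else 0)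
         + (if b ≤ m then ((a+1 : ℕ) : ℂ) * g2 (a+1) b + ((m+1-a : ℕ) : ℂ) * g4 a b else 0))
          * s^a * t^b
        = (if 1 ≤ b then ((a+1 : ℕ) : ℂ) * g1 (a+1) (b-1)
              + ((m+1-a : ℕ) : ℂ) * g3 a (b-1) else 0) * s^a * t^b
          + (if b ≤ m then ((a+1 : ℕ) : ℂ) * g2 (a+1) b
              + ((m+1-a : ℕ) : ℂ) * g4 a b else 0) * s^a * t^b := fun b _ => by ring
    rw [Finset.sum_congr rfl hsplit, Finset.sum_add_distrib]
    congr 1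
    · rw [Finset.sum_range_succ']
      simp
    · rw [Finset.sum_range_succ]
      have : ¬ (m + 1 ≤ m) := by omega
      rw [if_neg this]
      simp only [zero_mul, add_zero]
      refine Finset.sum_congr rfl fun b hb => ?_
      rw [if_pos (by simpa [Nat.lt_succ_iff] using hb)]
  simp only [hR]
  simp only [Finset.mul_sum]
  simp only [← Finset.sum_add_distrib]
  refine Finset.sum_congr rfl fun a _ => ?_
  refine Finset.sum_congr rfl fun b _ => ?_
  ring

theorem box_pow_succ_eq_zero_of_Mprime_eq_zero (m : ℕ) (Ψ : SpinField)
    (c : (Fin 2 → Fin 2 → ℝ) → ℕ → ℕ → ℂ)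
    (hc : ∀ k k', ContDiff ℝ (⊤ : ℕ∞) (fun x => c x k k'))
    (hΨ : ∀ x π τ, Ψ x π τ =
      ∑ k ∈ Finset.range (m + 2), ∑ k' ∈ Finset.range (m + 1),
        c x k k' * (π 0) ^ k * (π 1) ^ (m + 1 - k) * (τ 0) ^ k' * (τ 1) ^ (m - k'))
    (hfe : ∀ x π τ, Mprime Ψ x π τ = 0) :
    ∀ x π τ, (Box^[m + 1] Ψ) x π τ = 0 := by
  classical
  set cc : ℕ → ℕ → Prop21.D := fun k k' x => c x k k' with hccdef
  have hsm' : ∀ k k', Prop21.Sm (cc k k') := fun k k' => (hc k k').of_le (by simp)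
  have hPsi : Ψ = Prop21.polyfield m cc := by
    funext y π' τ'
    rw [hΨ y π' τ']
    rfl
  -- canonical coefficients vanish
  have hcanon : ∀ (y : Fin 2 → Fin 2 → ℝ) (a b : ℕ), a < m+1 → b < m+2 →
      ((if 1 ≤ b then ((a+1 : ℕ) : ℂ) * Prop21.pd 0 0 (cc (a+1) (b-1)) y
            + ((m+1-a : ℕ) : ℂ) * Prop21.pd 1 0 (cc a (b-1)) y else 0)
        + (if b ≤ m then ((a+1 : ℕ) : ℂ) * Prop21.pd 0 1 (cc (a+1) b) y
            + ((m+1-a : ℕ) : ℂ) * Prop21.pd 1 1 (cc a b) y else 0)) = 0 := by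
    intro y a b ha hb
    refine coeff_ext2 (fun a b =>
      ((if 1 ≤ b then ((a+1 : ℕ) : ℂ) * Prop21.pd 0 0 (cc (a+1) (b-1)) y
            + ((m+1-a : ℕ) : ℂ) * Prop21.pd 1 0 (cc a (b-1)) y else 0)
        + (if b ≤ m then ((a+1 : ℕ) : ℂ) * Prop21.pd 0 1 (cc (a+1) b) y
            + ((m+1-a : ℕ) : ℂ) * Prop21.pd 1 1 (cc a b) y else 0)))
      (fun s t => ?_) a b ha hb
    rw [← reindex_main m (fun k k' => Prop21.pd 0 0 (cc k k') y)
        (fun k k' => Prop21.pd 0 1 (cc k k') y)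
        (fun k k' => Prop21.pd 1 0 (cc k k') y)
        (fun k k' => Prop21.pd 1 1 (cc k k') y) s t]
    rw [← Prop21.Mprime_eval m cc hsm' y s t, ← hPsi]
    exact hfe y ![s,1] ![t,1]
  -- the ℤ-indexed coefficient family
  have hez_sm : ∀ a b, Prop21.Sm (Prop21.ezF m cc a b) := by
    intro a b
    by_cases h : 0 ≤ a ∧ a ≤ (m : ℤ)+1 ∧ 0 ≤ b ∧ b ≤ (m : ℤ)
    · rw [Prop21.ezF_pos m cc h]; exact hsm' _ _
    · rw [Prop21.ezF_neg m cc h]; exact contDiff_const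
  have hez_supp : ∀ a b, (b < 0 ∨ (m:ℤ) < b) → Prop21.ezF m cc a b = 0 := by
    intro a b hb
    exact Prop21.ezF_neg m cc (by omega)
  have hzpd : ∀ (i j : Fin 2) (a b : ℤ),
      ¬(0 ≤ a ∧ a ≤ (m : ℤ)+1 ∧ 0 ≤ b ∧ b ≤ (m : ℤ)) →
      Prop21.pd i j (Prop21.ezF m cc a b) = 0 := by
    intro i j a b h
    rw [Prop21.ezF_neg m cc h, Prop21.pd_zero]
  have h0 : ∀ a b, Prop21.Mc ((m:ℤ)+1) (Prop21.ezF m cc) a b = 0 := by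
    intro a b
    by_cases hin : 0 ≤ a ∧ a ≤ (m : ℤ) ∧ 0 ≤ b ∧ b ≤ (m : ℤ)+1
    · obtain ⟨ha0, ham, hb0, hbm⟩ := hin
      lift a to ℕ using ha0
      lift b to ℕ using hb0
      have ham' : a ≤ m := by exact_mod_cast ham
      have hbm' : b ≤ m+1 := by exact_mod_cast hbm
      funext y
      simp only [Prop21.Mc, Pi.add_apply, Pi.smul_apply, smul_eq_mul, Pi.zero_apply]
      have hc' := hcanon y a b (by omega) (by omega)
      rw [show ((m+1-a : ℕ) : ℂ) = ((m:ℂ)+1-(a:ℂ)) by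
        rw [Nat.cast_sub (by omega)]; push_cast; ring] at hc'
      have e2 : Prop21.ezF m cc ((a:ℤ)+1) (b:ℤ) = (if b ≤ m then cc (a+1) b else 0) := by
        by_cases hbm2 : b ≤ m
        · rw [if_pos hbm2, show ((a:ℤ)+1) = ((a+1 : ℕ) : ℤ) by push_cast; ring]
          exact Prop21.ezF_entry m cc (by omega) hbm2
        · rw [if_neg hbm2]
          exact Prop21.ezF_neg m cc (by omega)
      have e4 : Prop21.ezF m cc (a:ℤ) (b:ℤ) = (if b ≤ m then cc a b else 0) := by
        by_cases hbm2 : b ≤ m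
        · rw [if_pos hbm2]; exact Prop21.ezF_entry m cc (by omega) hbm2
        · rw [if_neg hbm2]
          exact Prop21.ezF_neg m cc (by omega)
      have e1 : Prop21.ezF m cc ((a:ℤ)+1) ((b:ℤ)-1)
          = (if 1 ≤ b then cc (a+1) (b-1) else 0) := by
        by_cases hb1 : 1 ≤ b
        · rw [if_pos hb1, show ((a:ℤ)+1) = ((a+1 : ℕ) : ℤ) by push_cast; ring,
            show ((b:ℤ)-1) = ((b-1 : ℕ) : ℤ) by omega]
          exact Prop21.ezF_entry m cc (by omega) (by omega)
        · rw [if_neg hb1]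
          exact Prop21.ezF_neg m cc (by omega)
      have e3 : Prop21.ezF m cc (a:ℤ) ((b:ℤ)-1) = (if 1 ≤ b then cc a (b-1) else 0) := by
        by_cases hb1 : 1 ≤ b
        · rw [if_pos hb1, show ((b:ℤ)-1) = ((b-1 : ℕ) : ℤ) by omega]
          exact Prop21.ezF_entry m cc (by omega) (by omega)
        · rw [if_neg hb1]
          exact Prop21.ezF_neg m cc (by omega)
      rw [e1, e2, e3, e4]
      by_cases hb1 : 1 ≤ b
      · by_cases hbm2 : b ≤ m
        · simp only [if_pos hb1, if_pos hbm2] at hc' ⊢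
          push_cast at hc' ⊢
          linear_combination hc'
        · simp only [if_pos hb1, if_neg hbm2] at hc' ⊢
          simp only [Prop21.pd_zero, Pi.zero_apply, add_zero, mul_zero]
          push_cast at hc' ⊢
          linear_combination hc'
      · have hbm2 : b ≤ m := by omega
        simp only [if_neg hb1, if_pos hbm2] at hc' ⊢
        simp only [Prop21.pd_zero, Pi.zero_apply, zero_add, mul_zero]
        push_cast at hc' ⊢
        linear_combination hc'
    · -- out of range cases
      funext y
      simp only [Prop21.Mc, Pi.add_apply, Pi.smul_apply, smul_eq_mul, Pi.zero_apply]
      rcases (by omega : a < 0 ∨ (m:ℤ) < a ∨ b < 0 ∨ (m:ℤ)+1 < b) with h | h | h | h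
      · by_cases ha1 : a = -1
        · subst ha1
          rw [hzpd 1 0 _ _ (by omega), hzpd 1 1 _ _ (by omega)]
          simp only [Pi.zero_apply]
          push_cast
          ring
        · rw [hzpd 1 0 _ _ (by omega), hzpd 1 1 _ _ (by omega),
            hzpd 0 0 _ _ (by omega), hzpd 0 1 _ _ (by omega)]
          simp only [Pi.zero_apply]
          ring
      · by_cases ha1 : a = (m:ℤ)+1
        · subst ha1
          rw [hzpd 0 0 _ _ (by omega), hzpd 0 1 _ _ (by omega)]
          simp only [Pi.zero_apply]
          push_cast
          ring
        · rw [hzpd 1 0 _ _ (by omega), hzpd 1 1 _ _ (by omega),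
            hzpd 0 0 _ _ (by omega), hzpd 0 1 _ _ (by omega)]
          simp only [Pi.zero_apply]
          ring
      · rw [hzpd 1 0 _ _ (by omega), hzpd 1 1 _ _ (by omega),
          hzpd 0 0 _ _ (by omega), hzpd 0 1 _ _ (by omega)]
        simp only [Pi.zero_apply]
        ring
      · rw [hzpd 1 0 _ _ (by omega), hzpd 1 1 _ _ (by omega),
          hzpd 0 0 _ _ (by omega), hzpd 0 1 _ _ (by omega)]
        simp only [Pi.zero_apply]
        ring
  have hbox := Prop21.coeff_main hez_sm m h0 hez_supp
  intro x π τ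
  rw [hPsi, Prop21.Box_iter_polyfield m cc hsm' (m+1)]
  unfold Prop21.polyfield
  refine Finset.sum_eq_zero fun k hk => Finset.sum_eq_zero fun k' hk' => ?_
  rw [Finset.mem_range] at hk hk'
  have hcz : Prop21.boxc^[m+1] (cc k k') = 0 := by
    have hb := hbox (k : ℤ) (k' : ℤ)
    rwa [Prop21.ezF_entry m cc (by omega : k ≤ m+1) (by omega : k' ≤ m)] at hb
  simp [hcz]
end

section
/- Let m ≥ 0 and let p = (p_{AA'}) ∈ M₂(ℂ). The linear map P_p : V_{m+1,m} → V_{m,m+1} is bijective if and only if det p ≠ 0 (i.e. if and only if the covector modelled by p is not null). (Paper: Lemma 3.1.) -/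
/-!
Let `Q` be built like `P = P_p`, from the matrix `adj(p)ᵀ` and with the roles of `π` and `τ`
exchanged. Since `adj(p)ᵀ pᵀ = pᵀ adj(p)ᵀ = det p • 1`, the commutator `QP - PQ` is `det p`
times the difference of the Euler operators in `π` and in `τ`, so it acts on `V_{a,b}` as
`det p · (a - b)`.

If `det p ≠ 0` and `P L = 0` for `L ∈ V_{m+1,m}`, the commutator gives
`P Q^{k+1} L = -(k+1)² det p · Q^k L`; as `Q^{m+1} L = 0` for degree reasons, descending
induction yields `L = 0`. Symmetrically `Q` is injective on `V_{m,m+1}`, so both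
finite-dimensional spaces have the same dimension and `P` is bijective. If `det p = 0`, take
`v ≠ 0` with `vᵀ p = 0`: then `ℓ = Σ_A v_A π_A` satisfies `P (ℓ^{m+1} τ₀^m) = 0`.
-/

open MvPolynomial

/-- `V a b`: the space of polynomials in `π₀, π₁` (the left variables) and
`τ₀, τ₁` (the right variables) that are homogeneous of degree `a` in `π`
and of degree `b` in `τ`, modelling totally symmetric spinors with `a`
unprimed and `b` primed indices. -/
noncomputable def V (a b : ℕ) : Submodule ℂ (MvPolynomial (Fin 2 ⊕ Fin 2) ℂ) :=
  weightedHomogeneousSubmodule ℂ (Sum.elim (fun _ => 1) (fun _ => 0)) a ⊓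
    weightedHomogeneousSubmodule ℂ (Sum.elim (fun _ => 0) (fun _ => 1)) b

/-- The symbol map `P_p(L) = Σ_{A,A'} p_{AA'} · τ_{A'} · ∂L/∂π_A`. -/
noncomputable def Pmap (p : Matrix (Fin 2) (Fin 2) ℂ) :
    MvPolynomial (Fin 2 ⊕ Fin 2) ℂ → MvPolynomial (Fin 2 ⊕ Fin 2) ℂ :=
  fun L => ∑ A : Fin 2, ∑ A' : Fin 2,
    C (p A A') * (X (Sum.inr A') * pderiv (Sum.inl A) L)

open Sum

theorem Finset.sum_mul_sub_mul_sum {A α : Type*} [Ring A] (s : Finset α) (b : α → A) (a : A) :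
    (∑ x ∈ s, b x) * a - a * ∑ x ∈ s, b x = ∑ x ∈ s, (b x * a - a * b x) := by
  rw [Finset.sum_mul, Finset.mul_sum, Finset.sum_sub_distrib]

theorem Finset.mul_sum_sub_sum_mul {A α : Type*} [Ring A] (s : Finset α) (b : α → A) (a : A) :
    a * (∑ x ∈ s, b x) - (∑ x ∈ s, b x) * a = ∑ x ∈ s, (a * b x - b x * a) := by
  rw [Finset.sum_mul, Finset.mul_sum, Finset.sum_sub_distrib]

namespace Module.End

variable {K M : Type*} [Field K] [AddCommGroup M] [Module K M]
  {P Q : Module.End K M} {c : K} {n : ℕ} {f : M}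

theorem apply_pow_succ_eq_of_commutator
    (hcomm : ∀ j < n, (Q * P - P * Q) ((Q ^ j) f) = ((2 * j + 1 : K) * c) • (Q ^ j) f)
    (hP : P f = 0) {k : ℕ} (hk : k < n) :
    P ((Q ^ (k + 1)) f) = -((k + 1 : K) ^ 2 * c) • (Q ^ k) f := by
  have swap : ∀ g, P (Q g) = Q (P g) - (Q * P - P * Q) g := fun g => by simp
  induction k with
  | zero =>
    have h0 := hcomm 0 hk
    rw [pow_zero, one_apply] at h0
    rw [zero_add, pow_one, swap, hP, map_zero, zero_sub, h0, pow_zero, one_apply]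
    norm_num
  | succ k ih =>
    rw [pow_succ', mul_apply, swap, hcomm (k + 1) hk, ih (by omega), map_smul, ← mul_apply,
      ← pow_succ']
    push_cast
    module

theorem eq_zero_of_commutator [CharZero K] (hc : c ≠ 0)
    (hcomm : ∀ j < n, (Q * P - P * Q) ((Q ^ j) f) = ((2 * j + 1 : K) * c) • (Q ^ j) f)
    (hP : P f = 0) (hQ : (Q ^ n) f = 0) : f = 0 := by
  suffices ∀ k ≤ n, (Q ^ k) f = 0 by simpa using this 0 n.zero_le
  intro k hk
  refine Nat.decreasingInduction (motive := fun k _ => (Q ^ k) f = 0) (fun k hk ih => ?_) hQ hk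
  have h := apply_pow_succ_eq_of_commutator hcomm hP hk
  rw [ih, map_zero, eq_comm, smul_eq_zero] at h
  exact h.resolve_left
    (neg_ne_zero.2 (mul_ne_zero (pow_ne_zero _ (by exact_mod_cast k.succ_ne_zero)) hc))

end Module.End

theorem LinearMap.bijOn_of_injOn_of_injOn {K M N : Type*} [Field K] [AddCommGroup M]
    [Module K M] [AddCommGroup N] [Module K N] {U : Submodule K M} {W : Submodule K N}
    [FiniteDimensional K U] [FiniteDimensional K W] {f : M →ₗ[K] N} {g : N →ₗ[K] M}
    (hf : Set.MapsTo f U W) (hg : Set.MapsTo g W U) (hfi : Set.InjOn f U) (hgi : Set.InjOn g W) :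
    Set.BijOn f U W := by
  have hfr : Function.Injective (f.restrict hf) :=
    fun x y hxy => Subtype.ext (hfi x.2 y.2 (congrArg Subtype.val hxy))
  have hgr : Function.Injective (g.restrict hg) :=
    fun x y hxy => Subtype.ext (hgi x.2 y.2 (congrArg Subtype.val hxy))
  have hrank : Module.finrank K U = Module.finrank K W :=
    (finrank_le_finrank_of_injective hfr).antisymm (finrank_le_finrank_of_injective hgr)
  refine ⟨hf, hfi, fun y hy => ?_⟩
  obtain ⟨⟨x, hx⟩, hxy⟩ := (injective_iff_surjective_of_finrank_eq_finrank hrank).1 hfr ⟨y, hy⟩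
  exact ⟨x, hx, congrArg Subtype.val hxy⟩

noncomputable section

namespace MvPolynomial

variable {R σ : Type*} [CommRing R]

theorem pderiv_pderiv_comm (i j : σ) (f : MvPolynomial σ R) :
    pderiv i (pderiv j f) = pderiv j (pderiv i f) := by
  classical
  have h : ⁅pderiv i, pderiv j⁆ = (0 : Derivation R (MvPolynomial σ R) (MvPolynomial σ R)) :=
    derivation_ext fun k => by
      rw [Derivation.commutator_apply]
      simp [pderiv_X, Pi.single_apply, apply_ite]
  have := DFunLike.congr_fun h f
  rwa [Derivation.commutator_apply, Derivation.zero_apply, sub_eq_zero] at this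

theorem IsWeightedHomogeneous.pderiv_eq_zero {w : σ → ℕ} {φ : MvPolynomial σ R}
    (h : φ.IsWeightedHomogeneous w 0) {i : σ} (hi : w i ≠ 0) : pderiv i φ = 0 := by
  refine pderiv_eq_zero_of_notMem_vars fun hmem => hi ?_
  obtain ⟨d, hd, hid⟩ := (mem_vars_iff_mem_support i).1 hmem
  simpa [h (mem_support_iff.1 hd)] using
    Finsupp.le_weight_of_ne_zero' w (Finsupp.mem_support_iff.1 hid)

theorem IsWeightedHomogeneous.add_weight [Fintype σ] {w₁ w₂ : σ → ℕ} {φ : MvPolynomial σ R}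
    {m n : ℕ} (h₁ : φ.IsWeightedHomogeneous w₁ m) (h₂ : φ.IsWeightedHomogeneous w₂ n) :
    φ.IsWeightedHomogeneous (w₁ + w₂) (m + n) := fun d hd => by
  rw [← h₁ hd, ← h₂ hd, Finsupp.weight_eq_sum, Finsupp.weight_eq_sum, Finsupp.weight_eq_sum,
    ← Finset.sum_add_distrib]
  simp [mul_add]

def polarization (i j : σ) : Module.End R (MvPolynomial σ R) :=
  LinearMap.mulLeft R (X i) ∘ₗ (pderiv j).toLinearMap

@[simp]
theorem polarization_apply (i j : σ) (f : MvPolynomial σ R) :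
    polarization i j f = X i * pderiv j f := rfl

theorem polarization_mul_sub_mul [DecidableEq σ] (i j k l : σ) :
    polarization (R := R) i j * polarization k l - polarization k l * polarization i j =
      (if j = k then polarization i l else 0) - (if l = i then polarization k j else 0) := by
  refine LinearMap.ext fun f => ?_
  simp only [LinearMap.sub_apply, Module.End.mul_apply, polarization_apply,
    pderiv_mul, pderiv_X, pderiv_pderiv_comm j l]
  split_ifs <;> simp [*] <;> ring

theorem IsWeightedHomogeneous.polarization {M : Type*} [AddCancelCommMonoid M] {w : σ → M}
    {φ : MvPolynomial σ R} {n n' : M} (h : φ.IsWeightedHomogeneous w n) {i j : σ}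
    (h' : n' + w j = n) : (polarization i j φ).IsWeightedHomogeneous w (w i + n') :=
  (isWeightedHomogeneous_X R w i).mul (h.pderiv h')

/- Stated for this ring only: here the `R`-action on endomorphisms goes through `MvPolynomial`'s
own scalar instances, which a statement over a general `R`-algebra does not unify with. -/
theorem smul_mul_sub_mul_smul (c : R) (a b : Module.End R (MvPolynomial σ R)) :
    (c • b) * a - a * (c • b) = c • (b * a - a * b) := by
  rw [smul_mul_assoc, mul_smul_comm, smul_sub]

theorem mul_smul_sub_smul_mul (c : R) (a b : Module.End R (MvPolynomial σ R)) :
    a * (c • b) - (c • b) * a = c • (a * b - b * a) := by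
  rw [smul_mul_assoc, mul_smul_comm, smul_sub]

variable {ι κ : Type*} [Fintype ι] [Fintype κ]

def transferRight (p : Matrix ι κ R) : Module.End R (MvPolynomial (ι ⊕ κ) R) :=
  ∑ i, ∑ j, p i j • polarization (inr j) (inl i)

def transferLeft (q : Matrix ι κ R) : Module.End R (MvPolynomial (ι ⊕ κ) R) :=
  ∑ i, ∑ j, q i j • polarization (inl i) (inr j)

theorem transferRight_apply (p : Matrix ι κ R) (f : MvPolynomial (ι ⊕ κ) R) :
    transferRight p f = ∑ i, ∑ j, C (p i j) * (X (inr j) * pderiv (inl i) f) := by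
  simp [transferRight, smul_eq_C_mul]

theorem transferLeft_mul_sub_mul_transferRight [DecidableEq ι] [DecidableEq κ]
    (p q : Matrix ι κ R) :
    transferLeft q * transferRight p - transferRight p * transferLeft q =
      ∑ i, ∑ k, (q * p.transpose) i k • polarization (inl i) (inl k)
        - ∑ l, ∑ j, (p.transpose * q) l j • polarization (inr l) (inr j) := by
  simp only [transferLeft, transferRight, Finset.sum_mul_sub_mul_sum, Finset.mul_sum_sub_sum_mul,
    smul_mul_sub_mul_smul, mul_smul_sub_smul_mul, polarization_mul_sub_mul, inl.injEq, inr.injEq,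
    smul_sub, Finset.sum_sub_distrib, smul_ite, smul_zero, Finset.sum_ite_eq, Finset.sum_ite_eq',
    Finset.mem_univ, if_true, Finset.sum_ite_irrel, Finset.sum_const_zero, Matrix.mul_apply,
    Matrix.transpose_apply, Finset.sum_smul, smul_smul]
  congr 1
  · rw [Finset.sum_comm_cycle]
    simp only [mul_comm]
  · rw [Finset.sum_comm_cycle (s := Finset.univ (α := κ))]

theorem transferLeft_adjugate_mul_sub_mul_transferRight [DecidableEq ι] (p : Matrix ι ι R) :
    transferLeft p.adjugate.transpose * transferRight p
        - transferRight p * transferLeft p.adjugate.transpose =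
      p.det • (∑ i, polarization (inl i) (inl i) - ∑ j, polarization (inr j) (inr j)) := by
  rw [transferLeft_mul_sub_mul_transferRight, ← Matrix.transpose_mul, ← Matrix.transpose_mul,
    Matrix.mul_adjugate, Matrix.adjugate_mul]
  simp [Matrix.one_apply, ite_smul, smul_sub, Finset.smul_sum]

theorem transferRight_eq_zero_of_pderiv_eq {p : Matrix ι κ R} {v : ι → R}
    (hv : Matrix.vecMul v p = 0) {f g : MvPolynomial (ι ⊕ κ) R}
    (hf : ∀ i, pderiv (inl i) f = C (v i) * g) : transferRight p f = 0 := by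
  rw [transferRight_apply, Finset.sum_comm]
  refine Finset.sum_eq_zero fun j _ => ?_
  have hvj : ∑ i, v i * p i j = 0 := congrFun hv j
  calc ∑ i, C (p i j) * (X (inr j) * pderiv (inl i) f)
      = C (∑ i, v i * p i j) * (X (inr j) * g) := by
        simp only [hf, map_sum, map_mul, Finset.sum_mul]
        exact Finset.sum_congr rfl fun i _ => by ring
    _ = 0 := by rw [hvj, map_zero, zero_mul]

end MvPolynomial

end

theorem Pmap_eq_transferRight (p : Matrix (Fin 2) (Fin 2) ℂ) : Pmap p = transferRight p :=
  funext fun f => (transferRight_apply p f).symm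

theorem V_le_homogeneousSubmodule (a b : ℕ) :
    V a b ≤ homogeneousSubmodule (Fin 2 ⊕ Fin 2) ℂ (a + b) := fun f hf => by
  have h := hf.1.add_weight hf.2
  rwa [show (Sum.elim (fun _ => 1) (fun _ => 0) + Sum.elim (fun _ => 0) (fun _ => 1) :
    Fin 2 ⊕ Fin 2 → ℕ) = 1 from funext (Sum.rec (fun _ => rfl) (fun _ => rfl))] at h

instance (a b : ℕ) : FiniteDimensional ℂ (V a b) :=
  have : FiniteDimensional ℂ (homogeneousSubmodule (Fin 2 ⊕ Fin 2) ℂ (a + b)) :=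
    Module.Finite.iff_fg.2 (homogeneousSubmodule_fg _ _ _)
  Submodule.finiteDimensional_of_le (V_le_homogeneousSubmodule a b)

section V

variable {a b : ℕ} {f : MvPolynomial (Fin 2 ⊕ Fin 2) ℂ}

theorem sum_polarization_inl_self_apply (hf : f ∈ V a b) :
    (∑ i, polarization (R := ℂ) (inl i) (inl i)) f = (a : ℂ) • f := by
  have h := hf.1.sum_weight_X_mul_pderiv
  simp only [Fintype.sum_sum_type, Sum.elim_inl, Sum.elim_inr, one_smul, zero_smul,
    Finset.sum_const_zero, add_zero] at h
  simpa [Nat.cast_smul_eq_nsmul] using h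

theorem sum_polarization_inr_self_apply (hf : f ∈ V a b) :
    (∑ j, polarization (R := ℂ) (inr j) (inr j)) f = (b : ℂ) • f := by
  have h := hf.2.sum_weight_X_mul_pderiv
  simp only [Fintype.sum_sum_type, Sum.elim_inl, Sum.elim_inr, one_smul, zero_smul,
    Finset.sum_const_zero, zero_add] at h
  simpa [Nat.cast_smul_eq_nsmul] using h

theorem commutator_apply_of_mem_V (p : Matrix (Fin 2) (Fin 2) ℂ) (hf : f ∈ V a b) :
    (transferLeft p.adjugate.transpose * transferRight p
        - transferRight p * transferLeft p.adjugate.transpose) f = (p.det * (a - b)) • f := by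
  rw [transferLeft_adjugate_mul_sub_mul_transferRight, LinearMap.smul_apply, LinearMap.sub_apply,
    sum_polarization_inl_self_apply hf, sum_polarization_inr_self_apply hf, ← sub_smul, smul_smul]

theorem polarization_inr_inl_mem_V (hf : f ∈ V (a + 1) b) (i j : Fin 2) :
    polarization (inr j) (inl i) f ∈ V a (b + 1) :=
  ⟨by simpa using hf.1.polarization (i := inr j) (n' := a) (by simp),
    by simpa [add_comm] using hf.2.polarization (i := inr j) (n' := b) (by simp)⟩

theorem polarization_inl_inr_mem_V (hf : f ∈ V a (b + 1)) (i j : Fin 2) :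
    polarization (inl i) (inr j) f ∈ V (a + 1) b :=
  ⟨by simpa [add_comm] using hf.1.polarization (i := inl i) (n' := a) (by simp),
    by simpa using hf.2.polarization (i := inl i) (n' := b) (by simp)⟩

theorem transferRight_mem_V (p : Matrix (Fin 2) (Fin 2) ℂ) (hf : f ∈ V (a + 1) b) :
    transferRight p f ∈ V a (b + 1) := by
  simp only [transferRight, LinearMap.sum_apply, LinearMap.smul_apply]
  exact Submodule.sum_mem _ fun i _ => Submodule.sum_mem _ fun j _ =>
    Submodule.smul_mem _ _ (polarization_inr_inl_mem_V hf i j)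

theorem transferLeft_mem_V (q : Matrix (Fin 2) (Fin 2) ℂ) (hf : f ∈ V a (b + 1)) :
    transferLeft q f ∈ V (a + 1) b := by
  simp only [transferLeft, LinearMap.sum_apply, LinearMap.smul_apply]
  exact Submodule.sum_mem _ fun i _ => Submodule.sum_mem _ fun j _ =>
    Submodule.smul_mem _ _ (polarization_inl_inr_mem_V hf i j)

theorem transferRight_pow_mem_V (p : Matrix (Fin 2) (Fin 2) ℂ) (k : ℕ) (hf : f ∈ V (a + k) b) :
    (transferRight p ^ k) f ∈ V a (b + k) := by
  induction k generalizing a with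
  | zero => simpa using hf
  | succ k ih =>
    rw [pow_succ', Module.End.mul_apply, ← add_assoc]
    exact transferRight_mem_V p (ih (by rwa [add_right_comm, add_assoc]))

theorem transferLeft_pow_mem_V (q : Matrix (Fin 2) (Fin 2) ℂ) (k : ℕ) (hf : f ∈ V a (b + k)) :
    (transferLeft q ^ k) f ∈ V (a + k) b := by
  induction k generalizing b with
  | zero => simpa using hf
  | succ k ih =>
    rw [pow_succ', Module.End.mul_apply, ← add_assoc]
    exact transferLeft_mem_V q (ih (by rwa [add_right_comm, add_assoc]))

theorem transferRight_eq_zero_of_mem_V_zero (p : Matrix (Fin 2) (Fin 2) ℂ) (hf : f ∈ V 0 b) :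
    transferRight p f = 0 := by
  have h i : pderiv (inl i) f = 0 := hf.1.pderiv_eq_zero (by simp)
  simp [transferRight_apply, h]

theorem transferLeft_eq_zero_of_mem_V_zero (q : Matrix (Fin 2) (Fin 2) ℂ) (hf : f ∈ V a 0) :
    transferLeft q f = 0 := by
  have h j : pderiv (inr j) f = 0 := hf.2.pderiv_eq_zero (by simp)
  simp [transferLeft, h]

end V

theorem injOn_transferRight {p : Matrix (Fin 2) (Fin 2) ℂ} (hdet : p.det ≠ 0) (m : ℕ) :
    Set.InjOn (transferRight p) (V (m + 1) m) := by
  refine (Set.injOn_iff_map_eq_zero _ _).2 fun f hf h => ?_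
  have hmem : ∀ j ≤ m, (transferLeft p.adjugate.transpose ^ j) f ∈ V (m + 1 + j) (m - j) :=
    fun j hj => transferLeft_pow_mem_V _ j (by rwa [Nat.sub_add_cancel hj])
  refine Module.End.eq_zero_of_commutator (Q := transferLeft p.adjugate.transpose) (n := m + 1)
    hdet (fun j hj => ?_) h ?_
  · rw [commutator_apply_of_mem_V p (hmem j (by omega))]
    congr 1
    push_cast [Nat.cast_sub (show j ≤ m by omega)]
    ring
  · rw [pow_succ', Module.End.mul_apply]
    exact transferLeft_eq_zero_of_mem_V_zero _ (by simpa using hmem m le_rfl)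

theorem injOn_transferLeft_adjugate {p : Matrix (Fin 2) (Fin 2) ℂ} (hdet : p.det ≠ 0) (m : ℕ) :
    Set.InjOn (transferLeft p.adjugate.transpose) (V m (m + 1)) := by
  refine (Set.injOn_iff_map_eq_zero _ _).2 fun f hf h => ?_
  have hmem : ∀ j ≤ m, (transferRight p ^ j) f ∈ V (m - j) (m + 1 + j) :=
    fun j hj => transferRight_pow_mem_V _ j (by rwa [Nat.sub_add_cancel hj])
  refine Module.End.eq_zero_of_commutator (Q := transferRight p) (n := m + 1) hdet
    (fun j hj => ?_) h ?_
  · rw [← neg_sub, LinearMap.neg_apply, commutator_apply_of_mem_V p (hmem j (by omega)),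
      ← neg_smul]
    congr 1
    push_cast [Nat.cast_sub (show j ≤ m by omega)]
    ring
  · rw [pow_succ', Module.End.mul_apply]
    exact transferRight_eq_zero_of_mem_V_zero _ (by simpa using hmem m le_rfl)

theorem exists_ne_zero_mem_V_transferRight_eq_zero {p : Matrix (Fin 2) (Fin 2) ℂ}
    (hdet : p.det = 0) (m : ℕ) : ∃ L ∈ V (m + 1) m, L ≠ 0 ∧ transferRight p L = 0 := by
  obtain ⟨v, hv0, hv⟩ := Matrix.exists_vecMul_eq_zero_iff.2 hdet
  set ℓ : MvPolynomial (Fin 2 ⊕ Fin 2) ℂ := ∑ i, C (v i) * X (inl i)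
  have hℓ : ∀ i, pderiv (inl i) ℓ = C (v i) := fun i => by
    simp only [ℓ, map_sum, pderiv_C_mul, pderiv_X, Pi.single_apply, inl.injEq, mul_ite, mul_one,
      mul_zero, Finset.sum_ite_eq', Finset.mem_univ, if_true]
  have hℓV : ℓ ∈ V 1 0 := Submodule.sum_mem _ fun i _ =>
    ⟨(isWeightedHomogeneous_X ℂ _ _).C_mul _, (isWeightedHomogeneous_X ℂ _ _).C_mul _⟩
  have hXV : (X (inr 0) : MvPolynomial (Fin 2 ⊕ Fin 2) ℂ) ∈ V 0 1 :=
    ⟨isWeightedHomogeneous_X ℂ _ _, isWeightedHomogeneous_X ℂ _ _⟩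
  refine ⟨ℓ ^ (m + 1) * X (inr 0) ^ m, ⟨?_, ?_⟩, ?_, transferRight_eq_zero_of_pderiv_eq hv
    (g := (m + 1 : MvPolynomial _ ℂ) * ℓ ^ m * X (inr 0) ^ m) fun i => ?_⟩
  · simpa using (hℓV.1.pow (m + 1)).mul (hXV.1.pow m)
  · simpa using (hℓV.2.pow (m + 1)).mul (hXV.2.pow m)
  · refine mul_ne_zero (pow_ne_zero _ fun h0 => hv0 (funext fun i => ?_))
      (pow_ne_zero _ (X_ne_zero _))
    exact C_eq_zero.1 (by rw [← hℓ i, h0, map_zero])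
  · rw [pderiv_mul, pderiv_pow, pderiv_pow, hℓ, pderiv_X_of_ne inr_ne_inl]
    push_cast
    ring

theorem Pmap_bijOn_iff_det_ne_zero (m : ℕ) (p : Matrix (Fin 2) (Fin 2) ℂ) :
    Set.BijOn (Pmap p) (V (m + 1) m : Set (MvPolynomial (Fin 2 ⊕ Fin 2) ℂ))
      (V m (m + 1) : Set (MvPolynomial (Fin 2 ⊕ Fin 2) ℂ)) ↔ p.det ≠ 0 := by
  rw [Pmap_eq_transferRight]
  refine ⟨fun h hdet => ?_, fun hdet => ?_⟩
  · obtain ⟨L, hL, hL0, hPL⟩ := exists_ne_zero_mem_V_transferRight_eq_zero hdet m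
    exact hL0 (h.injOn hL (zero_mem _) (by rw [hPL, map_zero]))
  · exact LinearMap.bijOn_of_injOn_of_injOn (fun _ => transferRight_mem_V p)
      (fun _ => transferLeft_mem_V _) (injOn_transferRight hdet m)
      (injOn_transferLeft_adjugate hdet m)
end

section
/- Let d ≥ 2 and let n = (n₁,…,n_d) ∈ ℂ^d satisfy Σᵢ nᵢ² = 1. Then the constant-coefficient operator T := Δ − (n·∂)², where Δ = Σᵢ ∂²/∂ξᵢ² and n·∂ = Σᵢ nᵢ ∂/∂ξᵢ, is surjective as a linear map from ℂ[ξ₁,…,ξ_d] to itself: for every polynomial σ there exists a polynomial α with (Δ − (n·∂)²)α = σ. (Paper: the solvability of equation (1.6), the core reduction in the proof of Proposition 5.1; it fails for d = 1, corresponding to the excluded two-dimensional space-time.) -/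
/-!
Under the apolarity pairing `⟨f, g⟩ = Σₐ a! f_a g_a` on polynomials, `∂ᵢ` is adjoint to
multiplication by `ξᵢ`, so `Δ − (n·∂)²` is adjoint to multiplication by its symbol
`Q = Σᵢ ξᵢ² − (Σᵢ nᵢ ξᵢ)²`. This quadratic form has `Q(eᵢ) = 1 − nᵢ²`, so it vanishes
identically only if every `nᵢ² = 1`, which `Σᵢ nᵢ² = 1` rules out unless `d = 1`.
The operator maps polynomials of degree `≤ m + 2` to those of degree `≤ m`, on which the pairing
is nondegenerate. A polynomial `g` of degree `≤ m` orthogonal to the image satisfies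
`⟨f, Q g⟩ = 0` for all `f` of degree `≤ m + 2`, so `Q g = 0` and `g = 0`: the restricted
operator is onto.
-/

open MvPolynomial

/-- The Laplacian `Δ = Σᵢ ∂²/∂ξᵢ²` on `ℂ[ξ₁,…,ξ_d]`. -/
noncomputable def lap {d : ℕ} (f : MvPolynomial (Fin d) ℂ) : MvPolynomial (Fin d) ℂ :=
  ∑ i : Fin d, pderiv i (pderiv i f)

/-- The directional derivative `n·∂ = Σᵢ nᵢ ∂/∂ξᵢ` on `ℂ[ξ₁,…,ξ_d]`. -/
noncomputable def ndel {d : ℕ} (n : Fin d → ℂ) (f : MvPolynomial (Fin d) ℂ) :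
    MvPolynomial (Fin d) ℂ :=
  ∑ i : Fin d, C (n i) * pderiv i f

namespace Finsupp

variable {σ : Type*}

def factorial (a : σ →₀ ℕ) : ℕ := a.prod fun _ k => k.factorial

lemma factorial_pos (a : σ →₀ ℕ) : 0 < a.factorial :=
  Finset.prod_pos fun _ _ => Nat.factorial_pos _

lemma factorial_add_single (a : σ →₀ ℕ) (i : σ) :
    (a + single i 1).factorial = (a i + 1) * a.factorial := by
  classical
  have h0 : ∀ _ : σ, (0 : ℕ).factorial = 1 := fun _ => rfl
  rw [factorial, factorial, ← mul_prod_erase' (a + single i 1) i _ h0,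
    ← mul_prod_erase' a i _ h0, erase_add, erase_single, add_zero]
  simp [Nat.factorial_succ, mul_assoc]

end Finsupp

theorem LinearMap.surjective_of_separatingLeft {K V W : Type*} [Field K]
    [AddCommGroup V] [Module K V] [AddCommGroup W] [Module K W] [FiniteDimensional K W]
    {B : W →ₗ[K] W →ₗ[K] K} (hB : B.SeparatingLeft) (T : V →ₗ[K] W)
    (hT : ∀ w, (∀ v, B w (T v) = 0) → w = 0) : Function.Surjective T := by
  have hB_surj : Function.Surjective B :=
    (LinearMap.injective_iff_surjective_of_finrank_eq_finrank Subspace.dual_finrank_eq.symm).1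
      (LinearMap.ker_eq_bot.1 (LinearMap.separatingLeft_iff_ker_eq_bot.1 hB))
  rw [← LinearMap.dualMap_injective_iff, injective_iff_map_eq_zero]
  intro φ hφ
  obtain ⟨w, rfl⟩ := hB_surj φ
  rw [hT w fun v => LinearMap.congr_fun hφ v, map_zero]

namespace MvPolynomial

section CommSemiring

variable {σ R : Type*} [CommSemiring R]

/-- The apolarity pairing `⟨f, g⟩ = Σₐ a! f_a g_a`. -/
noncomputable def apolar : MvPolynomial σ R →ₗ[R] MvPolynomial σ R →ₗ[R] R :=
  Finsupp.linearCombination R (fun a => (a.factorial : R) • lcoeff R a) ∘ₗ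
    (basisMonomials σ R).repr.toLinearMap

lemma apolar_apply (f g : MvPolynomial σ R) :
    apolar f g = ∑ a ∈ f.support, coeff a f * (a.factorial * coeff a g) := by
  simp only [apolar, LinearMap.coe_comp, LinearEquiv.coe_coe, Function.comp_apply,
    Finsupp.linearCombination_apply, Finsupp.sum, LinearMap.coe_sum, LinearMap.coe_smul,
    Finset.sum_apply, Pi.smul_apply, lcoeff_apply, smul_eq_mul]
  rfl

lemma apolar_monomial_left (a : σ →₀ ℕ) (c : R) (g : MvPolynomial σ R) :
    apolar (monomial a c) g = c * a.factorial * coeff a g := by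
  have hrepr : (basisMonomials σ R).repr (monomial a c) = Finsupp.single a c := rfl
  simp [apolar, hrepr, mul_assoc]

lemma apolar_monomial_right (f : MvPolynomial σ R) (b : σ →₀ ℕ) (c : R) :
    apolar f (monomial b c) = c * b.factorial * coeff b f := by
  classical
  induction f using MvPolynomial.induction_on' with
  | monomial a d =>
    rw [apolar_monomial_left, coeff_monomial, coeff_monomial]
    obtain rfl | hab := eq_or_ne a b
    · simp only [if_true]
      ring
    · simp [hab, hab.symm]
  | add p q hp hq => simp only [map_add, LinearMap.add_apply, hp, hq, coeff_add, mul_add]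

lemma apolar_C_mul_left (c : R) (f g : MvPolynomial σ R) :
    apolar (C c * f) g = c * apolar f g := by
  rw [C_mul', map_smul, LinearMap.smul_apply, smul_eq_mul]

lemma apolar_C_mul_right (c : R) (f g : MvPolynomial σ R) :
    apolar f (C c * g) = c * apolar f g := by
  rw [C_mul', map_smul, smul_eq_mul]

lemma apolar_pderiv_left (i : σ) (f g : MvPolynomial σ R) :
    apolar (pderiv i f) g = apolar f (X i * g) := by
  induction g using MvPolynomial.induction_on' with
  | monomial b c =>
    rw [X, monomial_mul, one_mul, add_comm, apolar_monomial_right, apolar_monomial_right,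
      coeff_pderiv, Finsupp.factorial_add_single]
    push_cast
    ring
  | add p q hp hq => simp only [mul_add, map_add, hp, hq]

lemma apolar_eq_zero_of_totalDegree_lt {f g : MvPolynomial σ R} {N : ℕ}
    (hf : f.totalDegree < N) (hg : g.IsHomogeneous N) : apolar f g = 0 := by
  rw [apolar_apply]
  refine Finset.sum_eq_zero fun a ha => ?_
  rw [hg.coeff_eq_zero ((le_totalDegree ha).trans_lt hf).ne, mul_zero, mul_zero]

end CommSemiring

section Field

variable {σ K : Type*} [Field K] [CharZero K]

lemma eq_zero_of_forall_apolar_eq_zero {g : MvPolynomial σ K} {m : ℕ}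
    (hg : g ∈ restrictTotalDegree σ K m)
    (h : ∀ f ∈ restrictTotalDegree σ K m, apolar f g = 0) : g = 0 := by
  ext a
  rw [coeff_zero]
  by_cases ha : (a.sum fun _ e => e) ≤ m
  · have := h (monomial a 1) ((mem_restrictTotalDegree _ _ _).2
      ((totalDegree_monomial_le a 1).trans ha))
    simpa [apolar_monomial_left, a.factorial_pos.ne'] using this
  · exact coeff_eq_zero_of_totalDegree_lt
      (((mem_restrictTotalDegree _ _ _).1 hg).trans_lt (not_le.1 ha))

lemma mapsTo_restrictTotalDegree_of_apolar_adjoint {T : MvPolynomial σ K → MvPolynomial σ K}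
    {Q : MvPolynomial σ K} {e : ℕ} (hQ : Q.IsHomogeneous e)
    (hT : ∀ f g, apolar (T f) g = apolar f (Q * g)) (m : ℕ) :
    Set.MapsTo T (restrictTotalDegree σ K (m + e)) (restrictTotalDegree σ K m) := by
  intro f hf
  rw [SetLike.mem_coe, mem_restrictTotalDegree] at hf ⊢
  refine Finset.sup_le fun b hb => ?_
  by_contra! hbm
  have hvanish : apolar (T f) (monomial b 1) = 0 := by
    rw [hT]
    exact apolar_eq_zero_of_totalDegree_lt (by omega)
      (hQ.mul (isHomogeneous_monomial 1 (n := b.sum fun _ e => e) rfl))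
  rw [apolar_monomial_right] at hvanish
  exact mem_support_iff.1 hb (by simpa [b.factorial_pos.ne'] using hvanish)

theorem surjective_of_apolar_adjoint [Finite σ] {T : MvPolynomial σ K →ₗ[K] MvPolynomial σ K}
    {Q : MvPolynomial σ K} {e : ℕ} (hQ : Q.IsHomogeneous e) (hQ0 : Q ≠ 0)
    (hT : ∀ f g, apolar (T f) g = apolar f (Q * g)) : Function.Surjective T := by
  intro p
  set m := p.totalDegree
  let V := restrictTotalDegree σ K
  let B : V m →ₗ[K] V m →ₗ[K] K := (apolar.compl₁₂ (V m).subtype (V m).subtype).flip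
  have hB : B.SeparatingLeft := fun g hg => Subtype.ext <|
    eq_zero_of_forall_apolar_eq_zero g.2 fun f hf => hg ⟨f, hf⟩
  let T' := T.restrict (mapsTo_restrictTotalDegree_of_apolar_adjoint hQ hT m)
  have hT' : ∀ g : V m, (∀ f, B g (T' f) = 0) → g = 0 := by
    intro g hg
    have hg_deg : (g : MvPolynomial σ K).totalDegree ≤ m := (mem_restrictTotalDegree _ _ _).1 g.2
    have hQg : Q * g ∈ V (m + e) := (mem_restrictTotalDegree _ _ _).2 <|
      (totalDegree_mul _ _).trans (add_comm m e ▸ add_le_add hQ.totalDegree_le hg_deg)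
    have hQg_zero : Q * g = 0 := eq_zero_of_forall_apolar_eq_zero hQg fun f hf => by
      rw [← hT]
      exact hg ⟨f, hf⟩
    exact Subtype.ext ((mul_eq_zero.1 hQg_zero).resolve_left hQ0)
  obtain ⟨f, hf⟩ := LinearMap.surjective_of_separatingLeft hB T' hT'
    ⟨p, (mem_restrictTotalDegree _ _ _).2 le_rfl⟩
  exact ⟨f, congrArg Subtype.val hf⟩

end Field

end MvPolynomial

section LapSubNdelSq

variable {d : ℕ}

noncomputable def lapSubNdelSq (n : Fin d → ℂ) :
    MvPolynomial (Fin d) ℂ →ₗ[ℂ] MvPolynomial (Fin d) ℂ where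
  toFun f := lap f - ndel n (ndel n f)
  map_add' f g := by
    simp only [lap, ndel, map_add, mul_add, Finset.sum_add_distrib, map_sum, Finset.mul_sum]
    abel
  map_smul' c f := by
    simp only [lap, ndel, Derivation.map_smul, mul_smul_comm, ← Finset.smul_sum, map_sum,
      Finset.mul_sum, smul_sub, RingHom.id_apply]

lemma lapSubNdelSq_apply (n : Fin d → ℂ) (f : MvPolynomial (Fin d) ℂ) :
    lapSubNdelSq n f = lap f - ndel n (ndel n f) := rfl

noncomputable def lapSubNdelSqSymbol (n : Fin d → ℂ) : MvPolynomial (Fin d) ℂ :=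
  ∑ i, X i ^ 2 - (∑ i, C (n i) * X i) ^ 2

lemma apolar_lap (f g : MvPolynomial (Fin d) ℂ) :
    apolar (lap f) g = apolar f ((∑ i, X i ^ 2) * g) := by
  simp only [lap, map_sum, LinearMap.sum_apply, Finset.sum_mul,
    apolar_pderiv_left, sq, mul_assoc]

lemma apolar_ndel (n : Fin d → ℂ) (f g : MvPolynomial (Fin d) ℂ) :
    apolar (ndel n f) g = apolar f ((∑ i, C (n i) * X i) * g) := by
  simp only [ndel, map_sum, LinearMap.sum_apply, Finset.sum_mul,
    apolar_C_mul_left, apolar_C_mul_right, apolar_pderiv_left, mul_assoc]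

lemma apolar_lapSubNdelSq (n : Fin d → ℂ) (f g : MvPolynomial (Fin d) ℂ) :
    apolar (lapSubNdelSq n f) g = apolar f (lapSubNdelSqSymbol n * g) := by
  rw [lapSubNdelSq_apply, lapSubNdelSqSymbol, map_sub, LinearMap.sub_apply, apolar_lap,
    apolar_ndel, apolar_ndel, sub_mul, map_sub, sq, mul_assoc]

lemma isHomogeneous_lapSubNdelSqSymbol (n : Fin d → ℂ) :
    (lapSubNdelSqSymbol n).IsHomogeneous 2 :=
  (IsHomogeneous.sum _ _ _ fun i _ => isHomogeneous_X_pow i 2).sub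
    ((IsHomogeneous.sum _ _ _ fun i _ => isHomogeneous_C_mul_X (n i) i).pow 2)

lemma eval_single_lapSubNdelSqSymbol (n : Fin d → ℂ) (i : Fin d) :
    eval (Pi.single i 1) (lapSubNdelSqSymbol n) = 1 - n i ^ 2 := by
  simp [lapSubNdelSqSymbol, Pi.single_apply]

lemma lapSubNdelSqSymbol_ne_zero (hd : d ≠ 1) {n : Fin d → ℂ} (hn : ∑ i, n i ^ 2 = 1) :
    lapSubNdelSqSymbol n ≠ 0 := by
  intro h
  have hsq : ∀ i, n i ^ 2 = 1 := fun i => by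
    have hi := eval_single_lapSubNdelSqSymbol n i
    rw [h, map_zero] at hi
    linear_combination hi
  simp only [hsq, Finset.sum_const, Finset.card_univ, Fintype.card_fin, nsmul_eq_mul,
    mul_one, Nat.cast_eq_one] at hn
  exact hd hn

end LapSubNdelSq

theorem lap_sub_ndel_sq_surjective (d : ℕ) (hd : 2 ≤ d) (n : Fin d → ℂ)
    (hn : ∑ i, n i ^ 2 = 1) :
    ∀ σ : MvPolynomial (Fin d) ℂ, ∃ α : MvPolynomial (Fin d) ℂ,
      lap α - ndel n (ndel n α) = σ :=
  surjective_of_apolar_adjoint (isHomogeneous_lapSubNdelSqSymbol n)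
    (lapSubNdelSqSymbol_ne_zero (by omega) hn) (apolar_lapSubNdelSq n)
end

section
/- Let d ≥ 2, let κ ∈ ℂ be nonzero, and let κ₁,…,κ_d ∈ ℂ satisfy Σᵢ κᵢ² = κ² (so that (κ, κ₁,…,κ_d) models a nonzero null covector). Then for all polynomials γ, δ ∈ ℂ[ξ₁,…,ξ_d] there exist polynomials α, β ∈ ℂ[ξ₁,…,ξ_d] solving the system: κβ − (Σᵢ κᵢ ∂α/∂ξᵢ) = γ and κΔα − (Σᵢ κᵢ ∂β/∂ξᵢ) = δ, where Δ = Σᵢ ∂²/∂ξᵢ². (Paper: Proposition 5.1, surjectivity of the operator D = k_a∂^a on polynomial solutions of the wave equation, in the space-and-time decomposed form of equations (1.4)–(1.5), for each fixed nonzero null momentum.) -/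
/-!
Eliminating `β = κ⁻¹ (γ + Σᵢ κᵢ ∂ᵢα)` reduces the system to the single equation
`(κ² Δ - (Σᵢ κᵢ ∂ᵢ)²) α = κ δ + Σᵢ κᵢ ∂ᵢγ`, whose operator is `Σᵢⱼ aᵢⱼ ∂ᵢ∂ⱼ` with
`aᵢⱼ = κ² δᵢⱼ - κᵢ κⱼ`. By nullity the trace of `a` is `(d - 1) κ² ≠ 0`, so some
`aₖₖ = κ² - κₖ²` is nonzero.
Such an operator is surjective on polynomials: it sends `ξ^(m + 2eₖ)` to a nonzero multiple of
`ξ^m` plus monomials of smaller degree in the variables other than `ξₖ`, and induction on that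
degree reaches every monomial.
-/

open MvPolynomial

/-- The directional derivative `Σᵢ κᵢ ∂/∂ξᵢ` on `ℂ[ξ₁,…,ξ_d]`. -/
noncomputable def kdel {d : ℕ} (κv : Fin d → ℂ) (f : MvPolynomial (Fin d) ℂ) :
    MvPolynomial (Fin d) ℂ :=
  ∑ i : Fin d, C (κv i) * pderiv i f

open Finsupp

namespace MvPolynomial

section Triangular

variable {σ K : Type*} [Field K]

theorem mem_of_forall_monomial_one_mem {S : Submodule K (MvPolynomial σ K)}
    {p : MvPolynomial σ K} (h : ∀ m ∈ p.support, monomial m (1 : K) ∈ S) : p ∈ S := by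
  rw [p.as_sum]
  refine S.sum_mem fun m hm => ?_
  simpa [smul_monomial] using S.smul_mem (coeff m p) (h m hm)

theorem submodule_eq_top_of_triangular (S : Submodule K (MvPolynomial σ K))
    (μ : (σ →₀ ℕ) → ℕ)
    (h : ∀ m, ∃ q ∈ S, coeff m q ≠ 0 ∧ ∀ m' ∈ q.support, m' ≠ m → μ m' < μ m) : S = ⊤ := by
  classical
  have hmonomial : ∀ m, monomial m (1 : K) ∈ S := by
    intro m
    induction hn : μ m using Nat.strong_induction_on generalizing m with
    | _ n ih =>
      obtain ⟨q, hqS, hqm, hlower⟩ := h m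
      have hrest : q - monomial m (coeff m q) ∈ S := by
        refine mem_of_forall_monomial_one_mem fun m' hm' => ih _ ?_ m' rfl
        rw [mem_support_iff, coeff_sub, coeff_monomial] at hm'
        have hne : m' ≠ m := by rintro rfl; simp at hm'
        rw [if_neg hne.symm, sub_zero, ← mem_support_iff] at hm'
        exact hn ▸ hlower m' hm' hne
      have hlead : monomial m (coeff m q) ∈ S := by simpa using S.sub_mem hqS hrest
      simpa [smul_monomial, hqm] using S.smul_mem (coeff m q)⁻¹ hlead
  exact eq_top_iff.2 fun p _ => mem_of_forall_monomial_one_mem fun m _ => hmonomial m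

end Triangular

section SecondOrder

variable {σ R : Type*} [CommSemiring R] [DecidableEq σ]

theorem add_single_add_single_of_mem_support_pderiv_pderiv {i j : σ} {s m : σ →₀ ℕ} {c : R}
    (h : m ∈ (pderiv i (pderiv j (monomial s c))).support) :
    m + single i 1 + single j 1 = s := by
  rw [mem_support_iff, coeff_pderiv, coeff_pderiv, coeff_monomial] at h
  by_contra hne
  exact h (by simp [Ne.symm hne])

theorem coeff_pderiv_pderiv_monomial_add_single_two (k : σ) (m : σ →₀ ℕ) :
    coeff m (pderiv k (pderiv k (monomial (m + single k 2) (1 : R)))) =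
      (m k + 1) * (m k + 2) := by
  rw [coeff_pderiv, coeff_pderiv, coeff_monomial, if_pos (by rw [add_assoc, ← single_add])]
  simp only [Finsupp.add_apply, single_eq_same]
  push_cast
  ring

/-- The total degree of a monomial in the variables other than `k`. -/
noncomputable def degreeOff (k : σ) : (σ →₀ ℕ) →+ ℕ :=
  weight fun i => if i = k then 0 else 1

theorem degreeOff_lt_of_mem_support_pderiv_pderiv {k i j : σ} (hij : ¬(i = k ∧ j = k))
    {m m' : σ →₀ ℕ} {c : R}
    (h : m' ∈ (pderiv i (pderiv j (monomial (m + single k 2) c))).support) :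
    degreeOff k m' < degreeOff k m := by
  have := congrArg (degreeOff k) (add_single_add_single_of_mem_support_pderiv_pderiv h)
  simp only [degreeOff, map_add, weight_single, smul_eq_mul] at this ⊢
  split_ifs at this with hi hj hj <;> first | omega | exact (hij ⟨hi, hj⟩).elim

end SecondOrder

section ConstantCoefficient

variable {σ K : Type*} [Fintype σ] [Field K]

noncomputable def secondOrderOp (a : Matrix σ σ K) : Module.End K (MvPolynomial σ K) :=
  ∑ i, ∑ j, a i j • (pderiv i).toLinearMap ∘ₗ (pderiv j).toLinearMap

theorem secondOrderOp_apply (a : Matrix σ σ K) (p : MvPolynomial σ K) :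
    secondOrderOp a p = ∑ i, ∑ j, C (a i j) * pderiv i (pderiv j p) := by
  simp [secondOrderOp, smul_eq_C_mul]

theorem coeff_secondOrderOp (a : Matrix σ σ K) (p : MvPolynomial σ K) (m : σ →₀ ℕ) :
    coeff m (secondOrderOp a p) =
      ∑ ij : σ × σ, a ij.1 ij.2 * coeff m (pderiv ij.1 (pderiv ij.2 p)) := by
  rw [Fintype.sum_prod_type]
  simp [secondOrderOp_apply, coeff_sum]

theorem secondOrderOp_surjective [CharZero K] (a : Matrix σ σ K) {k : σ} (hk : a k k ≠ 0) :
    Function.Surjective (secondOrderOp a) := by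
  classical
  refine LinearMap.range_eq_top.1 (submodule_eq_top_of_triangular _ (degreeOff k) fun m => ?_)
  set p : MvPolynomial σ K := monomial (m + single k 2) 1
  have hoff : ∀ ij : σ × σ, ij ≠ (k, k) → ∀ m' ∈ (pderiv ij.1 (pderiv ij.2 p)).support,
      degreeOff k m' < degreeOff k m := fun ij hij m' =>
    degreeOff_lt_of_mem_support_pderiv_pderiv fun h => hij (Prod.ext h.1 h.2)
  refine ⟨secondOrderOp a p, LinearMap.mem_range_self _ _, ?_, fun m' hm' hne => ?_⟩
  · have hlead : coeff m (secondOrderOp a p) = a k k * ((m k + 1) * (m k + 2)) := by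
      rw [coeff_secondOrderOp, Fintype.sum_eq_single (k, k) fun ij hij => ?_,
        coeff_pderiv_pderiv_monomial_add_single_two]
      rw [notMem_support_iff.1 fun hm => (hoff ij hij m hm).false, mul_zero]
    rw [hlead]
    exact mul_ne_zero hk (mul_ne_zero (by exact_mod_cast (m k).succ_ne_zero)
      (by exact_mod_cast (m k + 1).succ_ne_zero))
  · rw [mem_support_iff, coeff_secondOrderOp] at hm'
    obtain ⟨ij, -, hij⟩ := Finset.exists_ne_zero_of_sum_ne_zero hm'
    have hm'ij : m' ∈ (pderiv ij.1 (pderiv ij.2 p)).support :=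
      mem_support_iff.2 (right_ne_zero_of_mul hij)
    by_cases hkk : ij = (k, k)
    · subst hkk
      have := add_single_add_single_of_mem_support_pderiv_pderiv hm'ij
      rw [add_assoc, ← single_add] at this
      exact (hne (add_right_cancel this)).elim
    · exact hoff ij hkk m' hm'ij

end ConstantCoefficient

end MvPolynomial

theorem exists_apply_ne_of_sum_eq {ι K : Type*} [Fintype ι] [Field K] [CharZero K]
    {v : ι → K} {c : K} (hc : c ≠ 0) (hι : Fintype.card ι ≠ 1) (h : ∑ i, v i = c) :
    ∃ i, v i ≠ c := by
  by_contra! hv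
  simp only [hv, Finset.sum_const, Finset.card_univ, nsmul_eq_mul] at h
  have : ((Fintype.card ι : K) - 1) * c = 0 := by linear_combination h
  rcases mul_eq_zero.1 this with h1 | h0
  · exact hι (by exact_mod_cast sub_eq_zero.1 h1)
  · exact hc h0

section NullMomentum

variable {d : ℕ}

theorem kdel_add (κv : Fin d → ℂ) (p q : MvPolynomial (Fin d) ℂ) :
    kdel κv (p + q) = kdel κv p + kdel κv q := by
  simp [kdel, mul_add, Finset.sum_add_distrib]

theorem kdel_C_mul (κv : Fin d → ℂ) (c : ℂ) (p : MvPolynomial (Fin d) ℂ) :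
    kdel κv (C c * p) = C c * kdel κv p := by
  simp [kdel, Finset.mul_sum, mul_left_comm]

theorem secondOrderOp_smul_one_sub_vecMulVec (κ : ℂ) (κv : Fin d → ℂ)
    (p : MvPolynomial (Fin d) ℂ) :
    secondOrderOp (κ ^ 2 • (1 : Matrix (Fin d) (Fin d) ℂ) - Matrix.vecMulVec κv κv) p =
      C (κ ^ 2) * lap p - kdel κv (kdel κv p) := by
  simp [secondOrderOp_apply, lap, kdel, Matrix.one_apply, Matrix.vecMulVec_apply, sub_mul,
    Finset.sum_sub_distrib, Finset.mul_sum, apply_ite C, ite_mul, mul_assoc]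

end NullMomentum

theorem exists_solution_of_null_momentum_system (d : ℕ) (hd : 2 ≤ d)
    (κ : ℂ) (hκ : κ ≠ 0) (κv : Fin d → ℂ) (hnull : ∑ i, κv i ^ 2 = κ ^ 2)
    (γ δ : MvPolynomial (Fin d) ℂ) :
    ∃ α β : MvPolynomial (Fin d) ℂ,
      C κ * β - kdel κv α = γ ∧ C κ * lap α - kdel κv β = δ := by
  set a := κ ^ 2 • (1 : Matrix (Fin d) (Fin d) ℂ) - Matrix.vecMulVec κv κv
  obtain ⟨k, hk⟩ := exists_apply_ne_of_sum_eq (pow_ne_zero 2 hκ)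
    (by rw [Fintype.card_fin]; omega) hnull
  have hakk : a k k ≠ 0 := by
    simpa [a, Matrix.vecMulVec_apply, ← sq] using sub_ne_zero.2 hk.symm
  obtain ⟨α, hα⟩ := secondOrderOp_surjective a hakk (C κ * δ + kdel κv γ)
  rw [secondOrderOp_smul_one_sub_vecMulVec] at hα
  have hCκ : C κ * C κ⁻¹ = (1 : MvPolynomial (Fin d) ℂ) := by
    rw [← map_mul, mul_inv_cancel₀ hκ, map_one]
  refine ⟨α, C κ⁻¹ * (γ + kdel κv α), ?_, ?_⟩
  · linear_combination (γ + kdel κv α) * hCκ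
  · rw [kdel_C_mul, kdel_add]
    rw [map_pow] at hα
    linear_combination C κ⁻¹ * hα + (δ - C κ * lap α) * hCκ
end

section
/- For an integer j ≥ 0 define g_j(z) = Σ_{r=0}^{j} (−1)^r (z − 2r) Γ(z − r − j) / (Γ(z − r + 1) Γ(r+1) Γ(j − r + 1)) for complex z. Then: (i) g_0(z) = 1 for every z ∈ ℂ that is not a nonpositive integer; (ii) for every integer j ≥ 1 and every z ∈ ℂ which is not an integer ≤ 2j, g_j(z) = 0. (Paper: Lemma 5.3.) -/
/-!
Lemma 5.3: for `g_j(z) = Σ_{r=0}^{j} (−1)^r (z − 2r) Γ(z − r − j) /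
(Γ(z − r + 1) Γ(r+1) Γ(j − r + 1))`, the function `g_0` is identically `1`,
and `g_j` vanishes identically for `j ≥ 1` (away from the poles of the
Gamma factors).
-/

open Complex

/-- `g_j(z) = Σ_{r=0}^{j} (−1)^r (z − 2r) Γ(z − r − j) / (Γ(z − r + 1) Γ(r+1) Γ(j − r + 1))`. -/
noncomputable def g (j : ℕ) (z : ℂ) : ℂ :=
  ∑ r ∈ Finset.range (j + 1),
    (-1) ^ r * (z - 2 * r) * Complex.Gamma (z - r - j) /
      (Complex.Gamma (z - r + 1) * Complex.Gamma ((r : ℂ) + 1) *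
        Complex.Gamma ((j : ℂ) - r + 1))

/-- Shift formula for the Gamma function, iterated. -/
lemma gamma_shift_aux (n : ℕ) (w : ℂ) (h : ∀ k : ℕ, k ≤ n → w + k ≠ 0) :
    Complex.Gamma (w + (n + 1 : ℕ)) =
      (∏ k ∈ Finset.range (n + 1), (w + k)) * Complex.Gamma w := by
  induction n with
  | zero => simpa using Complex.Gamma_add_one w (by simpa using h 0 le_rfl)
  | succ n ih =>
    have h1 : (w + ((n + 1 : ℕ) + 1 : ℕ)) = (w + (n + 1 : ℕ)) + 1 := by push_cast; ring
    rw [h1, Complex.Gamma_add_one _ (by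
        have := h (n + 1) le_rfl
        push_cast at this ⊢
        intro hc; exact this (by linear_combination hc)),
      Finset.prod_range_succ, ih (fun k hk => h k (hk.trans (Nat.le_succ n)))]
    push_cast
    ring

/-- Partial fraction decomposition step. -/
lemma partial_frac_aux (z b pr ps fr fs jj rr : ℂ) (hb : b ≠ 0) (hpr : pr ≠ 0)
    (hps : ps ≠ 0) (hfr : fr ≠ 0) (hfs : fs ≠ 0) (hj : jj ≠ 0)
    (hrel : pr * b = (z - rr) * ps) (hb' : b = z - rr - jj) (r : ℕ) :
    (-1) ^ r * (z - 2 * rr) / (pr * b * fr * fs) =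
      (-1) ^ r * rr / (jj * fr * fs * pr) + (-1) ^ r * (jj - rr) / (jj * fr * fs * ps) := by
  subst hb'
  rw [div_add_div _ _ (by simp [hj, hfr, hfs, hpr]) (by simp [hj, hfr, hfs, hps]),
    div_eq_div_iff (by simp [hb, hfr, hfs, hpr]) (by simp [hj, hfr, hfs, hpr, hps])]
  linear_combination (-((-1) ^ r) * jj * fr ^ 2 * fs ^ 2 * (jj - rr) * pr) * hrel

theorem g_zero_eq_one_and_g_eq_zero :
    (∀ z : ℂ, (∀ n : ℕ, z ≠ -(n : ℂ)) → g 0 z = 1) ∧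
    (∀ j : ℕ, 1 ≤ j → ∀ z : ℂ, (∀ n : ℤ, n ≤ 2 * (j : ℤ) → z ≠ (n : ℂ)) →
      g j z = 0) := by
  constructor
  · intro z hz
    have hz0 : z ≠ 0 := by simpa using hz 0
    have h1 : Complex.Gamma (z + 1) ≠ 0 := by
      apply Complex.Gamma_ne_zero
      intro m hm
      exact hz (m + 1) (by push_cast at hm ⊢; linear_combination hm)
    simp only [g, Finset.sum_range_one, Nat.cast_zero, pow_zero, mul_zero, sub_zero, one_mul,
      zero_add, Complex.Gamma_one, mul_one]
    rw [← Complex.Gamma_add_one z hz0]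
    field_simp
  · intro j hj z hz
    open Finset in
    have hne : ∀ m : ℕ, m ≤ 2 * j → z - m ≠ 0 := by
      intro m hm h
      exact hz m (by exact_mod_cast hm) (by push_cast; linear_combination h)
    set P : ℕ → ℂ := fun s => ∏ k ∈ Finset.range j, (z - s - k) with hP
    have hPne : ∀ s : ℕ, s ≤ j + 1 → P s ≠ 0 := by
      intro s hs
      refine Finset.prod_ne_zero_iff.mpr fun k hk => ?_
      have hk' : k < j := Finset.mem_range.mp hk
      have e : z - s - k = z - ((s + k : ℕ) : ℂ) := by push_cast; ring
      rw [e]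
      exact hne (s + k) (by omega)
    have hGne : ∀ r : ℕ, r ≤ j → Complex.Gamma (z - r - j) ≠ 0 := by
      intro r hr
      apply Complex.Gamma_ne_zero
      intro m h
      refine hz ((r : ℤ) + j - m) (by omega) ?_
      push_cast
      linear_combination h
    have hGamma : ∀ r : ℕ, r ≤ j →
        Complex.Gamma (z - r + 1) =
          (∏ k ∈ Finset.range (j + 1), (z - r - k)) * Complex.Gamma (z - r - j) := by
      intro r hr
      have h1 : z - r + 1 = (z - r - j) + ((j + 1 : ℕ) : ℂ) := by push_cast; ring
      rw [h1, gamma_shift_aux j (z - r - j) (by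
        intro k hk
        have e : z - r - j + k = z - ((r + j - k : ℕ) : ℂ) := by
          have e2 : ((r + j - k : ℕ) : ℂ) = (r : ℂ) + j - k := by
            push_cast [Nat.cast_sub (by omega : k ≤ r + j)]; ring
          rw [e2]; ring
        rw [e]
        exact hne (r + j - k) (by omega))]
      congr 1
      rw [← Finset.prod_range_reflect]
      refine Finset.prod_congr rfl fun i hi => ?_
      have hi' : i ≤ j := by have := Finset.mem_range.mp hi; omega
      push_cast [Nat.cast_sub hi']
      ring
    have hj0 : (j : ℂ) ≠ 0 := Nat.cast_ne_zero.mpr (by omega)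
    have hfac : ∀ m : ℕ, ((m.factorial : ℕ) : ℂ) ≠ 0 :=
      fun m => Nat.cast_ne_zero.mpr m.factorial_ne_zero
    -- per-term rewrite via partial fractions
    have hterm : ∀ r ∈ Finset.range (j + 1),
        (-1) ^ r * (z - 2 * r) * Complex.Gamma (z - r - j) /
          (Complex.Gamma (z - r + 1) * Complex.Gamma ((r : ℂ) + 1) *
            Complex.Gamma ((j : ℂ) - r + 1)) =
        (-1) ^ r * (r : ℂ) / ((j : ℂ) * r.factorial * (j - r).factorial * P r)
          + (-1) ^ r * ((j : ℂ) - r) /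
              ((j : ℂ) * r.factorial * (j - r).factorial * P (r + 1)) := by
      intro r hr
      have hr' : r ≤ j := by have := Finset.mem_range.mp hr; omega
      have hg1 : Complex.Gamma ((r : ℂ) + 1) = r.factorial := by
        exact_mod_cast Complex.Gamma_nat_eq_factorial r
      have hg2 : Complex.Gamma ((j : ℂ) - r + 1) = (j - r).factorial := by
        have e : (j : ℂ) - r = ((j - r : ℕ) : ℂ) := by push_cast [Nat.cast_sub hr']; ring
        rw [e]
        exact_mod_cast Complex.Gamma_nat_eq_factorial (j - r)
      have hfull1 : (∏ k ∈ Finset.range (j + 1), (z - r - k)) = P r * (z - r - j) := by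
        rw [Finset.prod_range_succ]
      have hfull2 : (∏ k ∈ Finset.range (j + 1), (z - r - k)) = (z - r) * P (r + 1) := by
        rw [Finset.prod_range_succ', mul_comm]
        congr 1
        · push_cast; ring
        · exact Finset.prod_congr rfl fun i _ => by push_cast; ring
      have ha : z - (r : ℂ) ≠ 0 := by
        have := hne r (by omega); simpa using this
      have hb : z - (r : ℂ) - j ≠ 0 := by
        have h2 := hne (r + j) (by omega)
        intro h; apply h2; push_cast; linear_combination h
      have hPr := hPne r (by omega)
      have hPr1 := hPne (r + 1) (by omega)
      have hGw := hGne r hr'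
      have hrel : P r * (z - r - j) = (z - (r : ℂ)) * P (r + 1) := by
        rw [← hfull1, hfull2]
      have hcancel : (-1) ^ r * (z - 2 * r) * Complex.Gamma (z - r - j) /
          (Complex.Gamma (z - r + 1) * Complex.Gamma ((r : ℂ) + 1) *
            Complex.Gamma ((j : ℂ) - r + 1)) =
          (-1) ^ r * (z - 2 * r) /
            (P r * (z - r - j) * r.factorial * (j - r).factorial) := by
        rw [hg1, hg2, hGamma r hr', hfull1,
          show P r * (z - ↑r - ↑j) * Complex.Gamma (z - ↑r - ↑j) * (r.factorial : ℂ) *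
              ((j - r).factorial : ℂ)
            = Complex.Gamma (z - ↑r - ↑j) *
              (P r * (z - ↑r - ↑j) * (r.factorial : ℂ) * ((j - r).factorial : ℂ)) from by ring,
          show (-1) ^ r * (z - 2 * ↑r) * Complex.Gamma (z - ↑r - ↑j)
            = Complex.Gamma (z - ↑r - ↑j) * ((-1) ^ r * (z - 2 * ↑r)) from by ring,
          mul_div_mul_left _ _ hGw]
      rw [hcancel]
      exact partial_frac_aux z (z - r - j) (P r) (P (r + 1)) r.factorial (j - r).factorial
        j r hb hPr hPr1 (hfac r) (hfac (j - r)) hj0 hrel rfl r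
    rw [g, Finset.sum_congr rfl hterm, Finset.sum_add_distrib,
      Finset.sum_range_succ' (fun r : ℕ =>
        (-1) ^ r * (r : ℂ) / ((j : ℂ) * r.factorial * (j - r).factorial * P r)),
      Finset.sum_range_succ (fun r : ℕ =>
        (-1) ^ r * ((j : ℂ) - r) / ((j : ℂ) * r.factorial * (j - r).factorial * P (r + 1)))]
    simp only [Nat.cast_zero, mul_zero, zero_div, add_zero, sub_self, zero_mul, mul_zero]
    rw [← Finset.sum_add_distrib]
    refine Finset.sum_eq_zero fun i hi => ?_
    have hij : i < j := Finset.mem_range.mp hi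
    have hPi := hPne (i + 1) (by omega)
    have f1 : (((i + 1).factorial : ℕ) : ℂ) = ((i : ℂ) + 1) * i.factorial := by
      rw [Nat.factorial_succ]; push_cast; ring
    have f2 : (((j - i).factorial : ℕ) : ℂ) = ((j : ℂ) - i) * ((j - (i + 1)).factorial : ℕ) := by
      have e : j - i = (j - (i + 1)) + 1 := by omega
      rw [e, Nat.factorial_succ]
      push_cast [Nat.cast_sub (by omega : i + 1 ≤ j)]
      ring
    have hi1 : ((i : ℂ) + 1) ≠ 0 := Nat.cast_add_one_ne_zero i
    have hji : ((j : ℂ) - i) ≠ 0 := by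
      have e : ((j : ℂ) - i) = ((j - i : ℕ) : ℂ) := by push_cast [Nat.cast_sub hij.le]; ring
      rw [e]
      exact Nat.cast_ne_zero.mpr (by omega)
    simp only [f1, f2, pow_succ]
    rw [div_add_div _ _
        (mul_ne_zero (mul_ne_zero (mul_ne_zero hj0 (mul_ne_zero hi1 (hfac i)))
          (hfac (j - (i + 1)))) hPi)
        (mul_ne_zero (mul_ne_zero (mul_ne_zero hj0 (hfac i))
          (mul_ne_zero hji (hfac (j - (i + 1))))) hPi),
      div_eq_zero_iff]
    left
    push_cast
    ring
end

section
/- For an integer j ≥ 1 define g_j(z) = Σ_{r=0}^{j} (−1)^r (z − 2r) Γ(z − r − j) / (Γ(z − r + 1) Γ(r+1) Γ(j − r + 1)). Then g_j is periodic with period 1: for every z ∈ ℂ which is not an integer ≤ 2j + 1, g_j(z) = g_j(z − 1). (Paper: the key step, equation (1.12), in the proof of Lemma 5.3.) -/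
/-!
Equation (1.12), the key step in the proof of Lemma 5.3: for `j ≥ 1` the
function `g_j(z) = Σ_{r=0}^{j} (−1)^r (z − 2r) Γ(z − r − j) /
(Γ(z − r + 1) Γ(r+1) Γ(j − r + 1))` is periodic with period 1.
-/

open Complex

private lemma cancel_aux (a b c : ℂ) (h : c ≠ 0) : a * c / (b * c) = a / b := by
  rw [mul_comm b c, ← div_div, mul_div_assoc, div_self h, mul_one]

private lemma Gamma_ratio (w : ℂ) (n : ℕ) (h : ∀ k : ℕ, k ≤ n → w - k ≠ 0) :
    Complex.Gamma (w + 1) = (∏ k ∈ Finset.range (n + 1), (w - k)) * Complex.Gamma (w - n) := by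
  induction n with
  | zero =>
    simpa using Complex.Gamma_add_one w (by simpa using h 0 le_rfl)
  | succ n ih =>
    rw [ih (fun k hk => h k (hk.trans (Nat.le_succ n)))]
    have h1 : w - ((n + 1 : ℕ) : ℂ) ≠ 0 := h (n + 1) le_rfl
    have h2 : Complex.Gamma (w - n) =
        (w - ((n + 1 : ℕ) : ℂ)) * Complex.Gamma (w - ((n + 1 : ℕ) : ℂ)) := by
      have h3 := Complex.Gamma_add_one _ h1
      rw [show w - ((n + 1 : ℕ) : ℂ) + 1 = w - n by push_cast; ring] at h3
      rw [h3]
    rw [h2, Finset.prod_range_succ (fun k : ℕ => w - (k : ℂ)) (n + 1)]; ring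

theorem g_periodic (j : ℕ) (hj : 1 ≤ j) (z : ℂ)
    (hz : ∀ n : ℤ, n ≤ 2 * (j : ℤ) + 1 → z ≠ (n : ℂ)) :
    g j z = g j (z - 1) := by
  have hnz : ∀ m : ℕ, m ≤ 2 * j + 1 → z - (m : ℂ) ≠ 0 := by
    intro m hm
    have h := hz m (by exact_mod_cast hm)
    rw [sub_ne_zero]
    simpa using h
  -- Gamma values are nonzero
  have hGnz : ∀ a : ℕ, a ≤ 2 * j + 1 → Complex.Gamma (z - a) ≠ 0 := by
    intro a ha
    apply Complex.Gamma_ne_zero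
    intro m hm
    have h := hz ((a : ℤ) - m) (by omega)
    apply h
    have : z = (a : ℂ) - m := by linear_combination hm
    rw [this]; push_cast; ring
  set P : ℕ → ℂ := fun r => ∏ k ∈ Finset.range (j + 1), (z - (r : ℂ) - (k : ℂ)) with hPdef
  have hP : ∀ s : ℕ, s ≤ j + 1 → P s ≠ 0 := by
    intro s hs
    rw [hPdef]
    apply Finset.prod_ne_zero_iff.mpr
    intro k hk
    rw [Finset.mem_range] at hk
    have h := hnz (s + k) (by omega)
    intro h0; apply h; push_cast; linear_combination h0
  have key : ∀ r : ℕ, P r * (z - (r : ℂ) - ((j : ℂ) + 1)) = P (r + 1) * (z - (r : ℂ)) := by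
    intro r
    have h1 : (∏ k ∈ Finset.range (j + 2), (z - (r : ℂ) - (k : ℂ)))
        = P r * (z - (r : ℂ) - ((j : ℂ) + 1)) := by
      rw [Finset.prod_range_succ, hPdef]; push_cast; ring
    have h2 : (∏ k ∈ Finset.range (j + 2), (z - (r : ℂ) - (k : ℂ)))
        = P (r + 1) * (z - (r : ℂ)) := by
      rw [Finset.prod_range_succ', hPdef]
      congr 1
      · exact Finset.prod_congr rfl (fun k _ => by push_cast; ring)
      · push_cast; ring
    rw [← h1, h2]
  have hA : g j z = ∑ r ∈ Finset.range (j + 1),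
      (-1) ^ r * (z - 2 * r) / (P r * (r.factorial : ℂ) * ((j - r).factorial : ℂ)) := by
    unfold g
    refine Finset.sum_congr rfl (fun r hr => ?_)
    have hr' : r ≤ j := Nat.lt_succ_iff.mp (Finset.mem_range.mp hr)
    have e1 : Complex.Gamma (z - r + 1) = P r * Complex.Gamma (z - r - j) := by
      have h := Gamma_ratio (z - r) j (fun k hk => by
        have h := hnz (r + k) (by omega)
        intro h0; apply h; push_cast; linear_combination h0)
      rw [h, hPdef]
    have e2 : Complex.Gamma ((r : ℂ) + 1) = (r.factorial : ℂ) :=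
      Complex.Gamma_nat_eq_factorial r
    have e3 : Complex.Gamma ((j : ℂ) - r + 1) = ((j - r).factorial : ℂ) := by
      rw [show (j : ℂ) - r = ((j - r : ℕ) : ℂ) by push_cast [Nat.cast_sub hr']; ring]
      exact Complex.Gamma_nat_eq_factorial _
    rw [e1, e2, e3]
    have hG : Complex.Gamma (z - r - j) ≠ 0 := by
      have h := hGnz (r + j) (by omega)
      rw [show z - (r : ℂ) - j = z - ((r + j : ℕ) : ℂ) by push_cast; ring]
      exact h
    rw [show P r * Complex.Gamma (z - r - j) * (r.factorial : ℂ) * ((j - r).factorial : ℂ)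
        = P r * (r.factorial : ℂ) * ((j - r).factorial : ℂ) * Complex.Gamma (z - r - j) by ring]
    exact cancel_aux _ _ _ hG
  have hB : g j (z - 1) = ∑ r ∈ Finset.range (j + 1),
      (-1) ^ r * (z - 1 - 2 * r) / (P (r + 1) * (r.factorial : ℂ) * ((j - r).factorial : ℂ)) := by
    unfold g
    refine Finset.sum_congr rfl (fun r hr => ?_)
    have hr' : r ≤ j := Nat.lt_succ_iff.mp (Finset.mem_range.mp hr)
    have e1 : Complex.Gamma (z - 1 - r + 1) = P (r + 1) * Complex.Gamma (z - 1 - r - j) := by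
      have h := Gamma_ratio (z - 1 - r) j (fun k hk => by
        have h := hnz (1 + r + k) (by omega)
        intro h0; apply h; push_cast; linear_combination h0)
      rw [h, hPdef]
      congr 1
      exact Finset.prod_congr rfl (fun k _ => by push_cast; ring)
    have e2 : Complex.Gamma ((r : ℂ) + 1) = (r.factorial : ℂ) :=
      Complex.Gamma_nat_eq_factorial r
    have e3 : Complex.Gamma ((j : ℂ) - r + 1) = ((j - r).factorial : ℂ) := by
      rw [show (j : ℂ) - r = ((j - r : ℕ) : ℂ) by push_cast [Nat.cast_sub hr']; ring]
      exact Complex.Gamma_nat_eq_factorial _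
    rw [e1, e2, e3]
    have hG : Complex.Gamma (z - 1 - r - j) ≠ 0 := by
      have h := hGnz (1 + r + j) (by omega)
      rw [show z - 1 - (r : ℂ) - j = z - ((1 + r + j : ℕ) : ℂ) by push_cast; ring]
      exact h
    rw [show P (r + 1) * Complex.Gamma (z - 1 - r - j) * (r.factorial : ℂ) * ((j - r).factorial : ℂ)
        = P (r + 1) * (r.factorial : ℂ) * ((j - r).factorial : ℂ) * Complex.Gamma (z - 1 - r - j)
        by ring]
    exact cancel_aux _ _ _ hG
  rw [hA, hB, ← sub_eq_zero, ← Finset.sum_sub_distrib]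
  set W : ℕ → ℂ := fun r => if r ≤ j then
      (-1) ^ r * (r : ℂ) / (P r * (r.factorial : ℂ) * ((j - r).factorial : ℂ)) else 0 with hWdef
  have tel : ∑ r ∈ Finset.range (j + 1), (W (r + 1) - W r) = 0 := by
    rw [Finset.sum_range_sub W (j + 1), hWdef]
    simp
  rw [← tel]
  refine Finset.sum_congr rfl (fun r hr => ?_)
  have hr' : r ≤ j := Nat.lt_succ_iff.mp (Finset.mem_range.mp hr)
  have hPr1 : P (r + 1) ≠ 0 := hP (r + 1) (by omega)
  have hzr : z - (r : ℂ) ≠ 0 := hnz r (by omega)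
  have hzrj : z - (r : ℂ) - ((j : ℂ) + 1) ≠ 0 := by
    have h := hnz (r + j + 1) (by omega)
    intro h0; apply h; push_cast; linear_combination h0
  have hPsub : P r = P (r + 1) * (z - (r : ℂ)) / (z - (r : ℂ) - ((j : ℂ) + 1)) := by
    rw [eq_div_iff hzrj]; exact key r
  have hfr : ((r.factorial : ℂ)) ≠ 0 := Nat.cast_ne_zero.mpr r.factorial_ne_zero
  rcases eq_or_lt_of_le hr' with heq | hlt
  · subst heq
    rw [hWdef]
    simp only [if_neg (by omega : ¬ (r + 1 ≤ r)), if_pos le_rfl, Nat.sub_self,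
      Nat.factorial_zero, Nat.cast_one, hPsub]
    field_simp
    ring
  · rw [hWdef]
    simp only [if_pos hlt, if_pos hr']
    have hfac1 : (((r + 1).factorial : ℕ) : ℂ) = ((r : ℂ) + 1) * (r.factorial : ℂ) := by
      rw [Nat.factorial_succ]; push_cast; ring
    have hfac2 : (((j - r).factorial : ℕ) : ℂ)
        = ((j : ℂ) - r) * (((j - (r + 1)).factorial : ℕ) : ℂ) := by
      rw [show j - r = (j - (r + 1)) + 1 by omega, Nat.factorial_succ]
      push_cast [Nat.cast_sub (by omega : r + 1 ≤ j)]
      ring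
    have hfr1 : (((j - (r + 1)).factorial : ℕ) : ℂ) ≠ 0 :=
      Nat.cast_ne_zero.mpr (j - (r + 1)).factorial_ne_zero
    have hjr : ((j : ℂ) - r) ≠ 0 := by
      have : ((j : ℂ) - r) = ((j - r : ℕ) : ℂ) := by push_cast [Nat.cast_sub hr']; ring
      rw [this]
      exact Nat.cast_ne_zero.mpr (by omega : j - r ≠ 0)
    have hr1 : ((r : ℂ) + 1) ≠ 0 := by
      have : ((r : ℂ) + 1) = ((r + 1 : ℕ) : ℂ) := by push_cast; ring
      rw [this]; exact Nat.cast_ne_zero.mpr (by omega : r + 1 ≠ 0)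
    have hconv : ∀ X K : ℂ, X / (P r * (r.factorial : ℂ) * K)
        = X * (z - (r : ℂ) - ((j : ℂ) + 1)) / (P (r + 1) * (z - (r : ℂ)) * (r.factorial : ℂ) * K) := by
      intro X K
      rw [hPsub, div_mul_eq_mul_div, div_mul_eq_mul_div, div_div_eq_mul_div]
    rw [hfac1, hfac2, pow_succ]
    rw [hconv, hconv]
    push_cast
    rw [if_pos (show r + 1 ≤ j from hlt)]
    have h1 : P (r + 1) * (z - (r : ℂ)) * (r.factorial : ℂ)
        * (((j : ℂ) - r) * ((j - (r + 1)).factorial : ℂ)) ≠ 0 :=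
      mul_ne_zero (mul_ne_zero (mul_ne_zero hPr1 hzr) hfr) (mul_ne_zero hjr hfr1)
    have h2 : P (r + 1) * (r.factorial : ℂ)
        * (((j : ℂ) - r) * ((j - (r + 1)).factorial : ℂ)) ≠ 0 :=
      mul_ne_zero (mul_ne_zero hPr1 hfr) (mul_ne_zero hjr hfr1)
    have h3 : P (r + 1) * (((r : ℂ) + 1) * (r.factorial : ℂ))
        * ((j - (r + 1)).factorial : ℂ) ≠ 0 :=
      mul_ne_zero (mul_ne_zero hPr1 (mul_ne_zero hr1 hfr)) hfr1
    rw [div_sub_div _ _ h1 h2, div_sub_div _ _ h3 h1,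
      div_eq_div_iff (mul_ne_zero h1 h2) (mul_ne_zero h3 h1)]
    ring
end

section
/- Let d ≥ 1, let n ∈ ℂ^d satisfy Σᵢ nᵢ² = 1, and let p, q, r ≥ 0 be integers. Let υ ∈ ℂ[ξ₁,…,ξ_d] be homogeneous of degree r with Δυ = 0 and (n·∂)υ = 0. Set s = Σᵢ nᵢξᵢ and w = (Σᵢ ξᵢ²) − s². Then (Δ − (n·∂)²)( w^{q+1} s^{p} υ ) = 2(q+1)(2q + 2r + d − 1) · s^{p} w^{q} υ. In particular, whenever 2q + 2r + d − 1 ≠ 0, the polynomial σ = s^p w^q υ lies in the range of the operator Δ − (n·∂)², with explicit preimage a scalar multiple of w·σ. (Paper: the explicit solution of equation (1.6) for right-hand sides of the special form (1.14), in the proof of Proposition 5.1.) -/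
/-!
The explicit solution of equation (1.6) for right-hand sides of the special
form (1.14): with `s = Σᵢ nᵢξᵢ`, `w = Σᵢ ξᵢ² − s²` and `υ` harmonic,
homogeneous of degree `r` and annihilated by `n·∂`, one has
`(Δ − (n·∂)²)(w^{q+1} s^p υ) = 2(q+1)(2q + 2r + d − 1) s^p w^q υ`.
-/

open MvPolynomial

/-- `s = Σᵢ nᵢ ξᵢ`. -/
noncomputable def sPoly {d : ℕ} (n : Fin d → ℂ) : MvPolynomial (Fin d) ℂ :=
  ∑ i : Fin d, C (n i) * X i

/-- `w = (Σᵢ ξᵢ²) − s²`. -/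
noncomputable def wPoly {d : ℕ} (n : Fin d → ℂ) : MvPolynomial (Fin d) ℂ :=
  (∑ i : Fin d, X i ^ 2) - sPoly n ^ 2

namespace LapAux

variable {d : ℕ} (n : Fin d → ℂ)

/-- auxiliary bilinear form `B(f,g) = Σᵢ ∂ᵢf ∂ᵢg − (n·∂f)(n·∂g)`. -/
noncomputable def bil (f g : MvPolynomial (Fin d) ℂ) : MvPolynomial (Fin d) ℂ :=
  (∑ i : Fin d, pderiv i f * pderiv i g) - ndel n f * ndel n g

/-- `L = Δ − (n·∂)²`. -/
noncomputable def Lop (f : MvPolynomial (Fin d) ℂ) : MvPolynomial (Fin d) ℂ :=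
  lap f - ndel n (ndel n f)

lemma ndel_add (f g : MvPolynomial (Fin d) ℂ) : ndel n (f + g) = ndel n f + ndel n g := by
  simp [ndel, mul_add, Finset.sum_add_distrib]

lemma ndel_mul (f g : MvPolynomial (Fin d) ℂ) :
    ndel n (f * g) = f * ndel n g + g * ndel n f := by
  simp only [ndel, pderiv_mul, mul_add, Finset.mul_sum]
  rw [← Finset.sum_add_distrib]
  exact Finset.sum_congr rfl fun i _ => by ring

lemma ndel_C_mul (a : ℂ) (f : MvPolynomial (Fin d) ℂ) :
    ndel n (C a * f) = C a * ndel n f := by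
  simp only [ndel, pderiv_C_mul, Finset.mul_sum]
  exact Finset.sum_congr rfl fun i _ => by ring

lemma lap_C_mul (a : ℂ) (f : MvPolynomial (Fin d) ℂ) :
    lap (C a * f) = C a * lap f := by
  simp [lap, pderiv_C_mul, Finset.mul_sum]

lemma lap_mul (f g : MvPolynomial (Fin d) ℂ) :
    lap (f * g) = f * lap g + g * lap f + 2 * ∑ i : Fin d, pderiv i f * pderiv i g := by
  have h : ∀ i : Fin d, pderiv i (pderiv i (f * g)) =
      f * pderiv i (pderiv i g) + g * pderiv i (pderiv i f) +
        2 * (pderiv i f * pderiv i g) := by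
    intro i
    simp only [pderiv_mul, map_add]
    ring
  simp only [lap, h, Finset.sum_add_distrib, Finset.mul_sum]

lemma Lop_mul (f g : MvPolynomial (Fin d) ℂ) :
    Lop n (f * g) = f * Lop n g + g * Lop n f + 2 * bil n f g := by
  simp only [Lop, bil, lap_mul, ndel_mul, ndel_add, mul_sub, Finset.mul_sum]
  ring

lemma Lop_C_mul (a : ℂ) (f : MvPolynomial (Fin d) ℂ) :
    Lop n (C a * f) = C a * Lop n f := by
  simp only [Lop, lap_C_mul, ndel_C_mul, mul_sub]

lemma bil_comm (f g : MvPolynomial (Fin d) ℂ) : bil n f g = bil n g f := by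
  simp only [bil, mul_comm]

lemma bil_mul_right (f g h : MvPolynomial (Fin d) ℂ) :
    bil n f (g * h) = g * bil n f h + h * bil n f g := by
  have key : ∀ i : Fin d, pderiv i f * pderiv i (g * h) =
      g * (pderiv i f * pderiv i h) + h * (pderiv i f * pderiv i g) := by
    intro i
    rw [pderiv_mul]
    ring
  simp only [bil, key, Finset.sum_add_distrib, ← Finset.mul_sum, ndel_mul]
  ring

lemma bil_one (f : MvPolynomial (Fin d) ℂ) : bil n f 1 = 0 := by
  simp [bil, ndel]

lemma Lop_one : Lop n (1 : MvPolynomial (Fin d) ℂ) = 0 := by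
  simp [Lop, lap, ndel]

lemma bil_pow_zero {f g : MvPolynomial (Fin d) ℂ} (h : bil n f g = 0) (k : ℕ) :
    bil n f (g ^ k) = 0 := by
  induction k with
  | zero => simpa using bil_one n f
  | succ k ih =>
      rw [pow_succ, mul_comm, bil_mul_right, ih, h]
      ring

lemma bil_self_pow (f : MvPolynomial (Fin d) ℂ) (k : ℕ) :
    bil n f (f ^ (k + 1)) = (k + 1) • (f ^ k * bil n f f) := by
  induction k with
  | zero => simp
  | succ k ih =>
      rw [pow_succ f (k + 1), mul_comm (f ^ (k + 1)) f, bil_mul_right, ih,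
        mul_smul_comm, show f * (f ^ k * bil n f f) = f ^ (k + 1) * bil n f f by ring]
      simp only [succ_nsmul]

lemma Lop_pow_zero {g : MvPolynomial (Fin d) ℂ} (hL : Lop n g = 0) (hb : bil n g g = 0)
    (k : ℕ) : Lop n (g ^ k) = 0 := by
  induction k with
  | zero => simpa using Lop_one n
  | succ k ih =>
      have h0 : bil n (g ^ k) g = 0 := by
        rw [bil_comm]; exact bil_pow_zero n hb k
      rw [pow_succ, Lop_mul, ih, hL, h0]
      ring

lemma smul_to_C (m : ℕ) (f : MvPolynomial (Fin d) ℂ) : m • f = C (m : ℂ) * f := by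
  rw [nsmul_eq_mul, ← map_natCast (C : ℂ →+* MvPolynomial (Fin d) ℂ) m]

lemma two_eq_C : (2 : MvPolynomial (Fin d) ℂ) = C (2 : ℂ) :=
  (map_ofNat (C : ℂ →+* MvPolynomial (Fin d) ℂ) 2).symm

lemma pderiv_sPoly (i : Fin d) : pderiv i (sPoly n) = C (n i) := by
  rw [sPoly, map_sum, Finset.sum_eq_single i]
  · simp
  · intro j _ hj
    rw [pderiv_C_mul, pderiv_X_of_ne hj, mul_zero]
  · exact fun h => absurd (Finset.mem_univ i) h

lemma pderiv_wPoly (i : Fin d) :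
    pderiv i (wPoly n) = C 2 * X i - C 2 * C (n i) * sPoly n := by
  have h1 : pderiv i (∑ j : Fin d, (X j : MvPolynomial (Fin d) ℂ) ^ 2) = C 2 * X i := by
    rw [map_sum, Finset.sum_eq_single i]
    · rw [pderiv_pow, pderiv_X_self]
      push_cast
      rw [two_eq_C]
      ring
    · intro j _ hj
      rw [pderiv_pow, pderiv_X_of_ne hj, mul_zero]
    · exact fun h => absurd (Finset.mem_univ i) h
  rw [wPoly, map_sub, h1, pderiv_pow, pderiv_sPoly, pow_one]
  push_cast
  rw [two_eq_C]
  ring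

lemma sum_C_sq (hn : ∑ i, n i ^ 2 = 1) :
    (∑ i : Fin d, (C (n i) * C (n i) : MvPolynomial (Fin d) ℂ)) = 1 := by
  have h : ∀ i : Fin d, (C (n i) * C (n i) : MvPolynomial (Fin d) ℂ) = C (n i * n i) :=
    fun i => (map_mul _ _ _).symm
  rw [Finset.sum_congr rfl fun i _ => h i, ← map_sum,
    show (∑ i, n i * n i) = 1 by simpa [sq] using hn, map_one]

lemma ndel_sPoly (hn : ∑ i, n i ^ 2 = 1) : ndel n (sPoly n) = 1 := by
  simp only [ndel, pderiv_sPoly]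
  exact sum_C_sq n hn

lemma ndel_wPoly (hn : ∑ i, n i ^ 2 = 1) : ndel n (wPoly n) = 0 := by
  simp only [ndel, pderiv_wPoly]
  have h : ∀ i : Fin d, C (n i) * (C 2 * X i - C 2 * C (n i) * sPoly n) =
      C 2 * (C (n i) * X i) - (C 2 * sPoly n) * (C (n i) * C (n i)) := fun i => by ring
  simp only [h, Finset.sum_sub_distrib, ← Finset.mul_sum]
  rw [sum_C_sq n hn, show (∑ i : Fin d, C (n i) * X i) = sPoly n from rfl]
  ring

lemma lap_sPoly : lap (sPoly n) = 0 := by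
  simp [lap, pderiv_sPoly, pderiv_C]

lemma lap_wPoly (hn : ∑ i, n i ^ 2 = 1) : lap (wPoly n) = C (2 * (d : ℂ) - 2) := by
  have h : ∀ i : Fin d, pderiv i (pderiv i (wPoly n)) =
      C 2 - C 2 * (C (n i) * C (n i)) := by
    intro i
    rw [pderiv_wPoly, map_sub, pderiv_C_mul, pderiv_X_self, mul_one,
      show (C 2 * C (n i) * sPoly n : MvPolynomial (Fin d) ℂ) = C (2 * n i) * sPoly n by
        rw [map_mul],
      pderiv_C_mul, pderiv_sPoly, map_mul]
    ring
  simp only [lap, h, Finset.sum_sub_distrib, ← Finset.mul_sum]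
  rw [sum_C_sq n hn, Finset.sum_const, Finset.card_univ, Fintype.card_fin, smul_to_C,
    show (2 * (d : ℂ) - 2) = (d : ℂ) * 2 - 2 * 1 by ring, map_sub, map_mul, map_mul,
    map_one]

lemma Lop_sPoly (hn : ∑ i, n i ^ 2 = 1) : Lop n (sPoly n) = 0 := by
  rw [Lop, lap_sPoly, ndel_sPoly n hn, show ndel n 1 = 0 by simp [ndel], sub_zero]

lemma Lop_wPoly (hn : ∑ i, n i ^ 2 = 1) : Lop n (wPoly n) = C (2 * (d : ℂ) - 2) := by
  rw [Lop, lap_wPoly n hn, ndel_wPoly n hn, show ndel n 0 = 0 by simp [ndel], sub_zero]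

lemma bil_ss (hn : ∑ i, n i ^ 2 = 1) : bil n (sPoly n) (sPoly n) = 0 := by
  simp only [bil, pderiv_sPoly, ndel_sPoly n hn, sum_C_sq n hn]
  ring

lemma bil_ws (hn : ∑ i, n i ^ 2 = 1) : bil n (wPoly n) (sPoly n) = 0 := by
  simp only [bil, pderiv_sPoly, pderiv_wPoly, ndel_wPoly n hn, zero_mul, sub_zero]
  have h : ∀ i : Fin d, (C 2 * X i - C 2 * C (n i) * sPoly n) * C (n i) =
      C 2 * (C (n i) * X i) - (C 2 * sPoly n) * (C (n i) * C (n i)) := fun i => by ring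
  simp only [h, Finset.sum_sub_distrib, ← Finset.mul_sum]
  rw [sum_C_sq n hn, show (∑ i : Fin d, C (n i) * X i) = sPoly n from rfl]
  ring

lemma bil_ww (hn : ∑ i, n i ^ 2 = 1) : bil n (wPoly n) (wPoly n) = C 4 * wPoly n := by
  simp only [bil, pderiv_wPoly, ndel_wPoly n hn, zero_mul, sub_zero]
  have h : ∀ i : Fin d, (C 2 * X i - C 2 * C (n i) * sPoly n) *
      (C 2 * X i - C 2 * C (n i) * sPoly n) =
      (C 2 * C 2) * (X i ^ 2) - ((2 * (C 2 * C 2)) * sPoly n) * (C (n i) * X i) +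
        ((C 2 * C 2) * sPoly n ^ 2) * (C (n i) * C (n i)) := fun i => by ring
  simp only [h, Finset.sum_sub_distrib, Finset.sum_add_distrib, ← Finset.mul_sum]
  rw [sum_C_sq n hn, show (∑ i : Fin d, C (n i) * X i) = sPoly n from rfl, wPoly,
    show (4 : ℂ) = 2 * 2 by norm_num, map_mul]
  ring

lemma euler {r : ℕ} {f : MvPolynomial (Fin d) ℂ} (hf : f.IsHomogeneous r) :
    ∑ i : Fin d, X i * pderiv i f = C (r : ℂ) * f := by
  conv_lhs => rw [← support_sum_monomial_coeff f]
  conv_rhs => rw [← support_sum_monomial_coeff f]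
  rw [Finset.mul_sum]
  simp only [map_sum, Finset.mul_sum]
  rw [Finset.sum_comm]
  refine Finset.sum_congr rfl fun m hm => ?_
  have hc : coeff m f ≠ 0 := mem_support_iff.mp hm
  have hdeg : (∑ i : Fin d, m i) = r := by
    have h2 := hf hc
    rw [Finsupp.weight_apply] at h2
    simp only [Pi.one_apply, smul_eq_mul, mul_one, Finsupp.sum] at h2
    rw [← h2]
    exact (Finset.sum_subset (Finset.subset_univ _)
      fun i _ hi => Finsupp.notMem_support_iff.mp hi).symm
  have key : ∀ i : Fin d, X i * pderiv i (monomial m (coeff m f)) =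
      monomial m (coeff m f * m i) := by
    intro i
    rw [pderiv_monomial]
    rcases Nat.eq_zero_or_pos (m i) with h | h
    · simp [h]
    · have hle : Finsupp.single i 1 ≤ m := Finsupp.single_le_iff.mpr h
      rw [show (X i : MvPolynomial (Fin d) ℂ) = monomial (Finsupp.single i 1) 1 from rfl,
        monomial_mul, one_mul, add_tsub_cancel_of_le hle]
  simp only [key]
  rw [← map_sum (monomial m), C_mul_monomial]
  congr 1
  rw [← Finset.mul_sum, ← Nat.cast_sum, hdeg]
  ring

lemma bil_sv {υ : MvPolynomial (Fin d) ℂ} (hndel : ndel n υ = 0) :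
    bil n (sPoly n) υ = 0 := by
  simp only [bil, pderiv_sPoly, hndel, mul_zero, sub_zero]
  exact hndel

lemma bil_wv (hn : ∑ i, n i ^ 2 = 1) {r : ℕ} {υ : MvPolynomial (Fin d) ℂ}
    (hhom : υ.IsHomogeneous r) (hndel : ndel n υ = 0) :
    bil n (wPoly n) υ = C (2 * (r : ℂ)) * υ := by
  simp only [bil, pderiv_wPoly, ndel_wPoly n hn, zero_mul, sub_zero]
  have h : ∀ i : Fin d, (C 2 * X i - C 2 * C (n i) * sPoly n) * pderiv i υ =
      C 2 * (X i * pderiv i υ) - (C 2 * sPoly n) * (C (n i) * pderiv i υ) := fun i => by ring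
  simp only [h, Finset.sum_sub_distrib, ← Finset.mul_sum]
  rw [euler hhom, show (∑ i : Fin d, C (n i) * pderiv i υ) = ndel n υ from rfl, hndel,
    map_mul]
  ring

lemma Lop_v {υ : MvPolynomial (Fin d) ℂ} (hlap : lap υ = 0) (hndel : ndel n υ = 0) :
    Lop n υ = 0 := by
  rw [Lop, hlap, hndel, show ndel n 0 = 0 by simp [ndel], sub_zero]

end LapAux

open LapAux in
theorem lap_sub_ndel_sq_special (d : ℕ) (hd : 1 ≤ d) (n : Fin d → ℂ)
    (hn : ∑ i, n i ^ 2 = 1) (p q r : ℕ) (υ : MvPolynomial (Fin d) ℂ)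
    (hhom : υ.IsHomogeneous r) (hlap : lap υ = 0) (hndel : ndel n υ = 0) :
    lap (wPoly n ^ (q + 1) * sPoly n ^ p * υ) -
        ndel n (ndel n (wPoly n ^ (q + 1) * sPoly n ^ p * υ)) =
      C ((2 * (q + 1) * (2 * q + 2 * r + d - 1) : ℕ) : ℂ) *
        (sPoly n ^ p * wPoly n ^ q * υ) ∧
    (2 * q + 2 * r + d - 1 ≠ 0 →
      ∃ α : MvPolynomial (Fin d) ℂ,
        lap α - ndel n (ndel n α) = sPoly n ^ p * wPoly n ^ q * υ) := by
  set G : MvPolynomial (Fin d) ℂ := sPoly n ^ p * υ with hG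
  have h1 : bil n υ (sPoly n) = 0 := by rw [bil_comm]; exact bil_sv n hndel
  have h2 : bil n (sPoly n ^ p) υ = 0 := by rw [bil_comm]; exact bil_pow_zero n h1 p
  have hLG : Lop n G = 0 := by
    rw [hG, Lop_mul, Lop_v n hlap hndel,
      Lop_pow_zero n (Lop_sPoly n hn) (bil_ss n hn) p, h2]
    ring
  have hbG : bil n (wPoly n) G = C (2 * (r : ℂ)) * G := by
    rw [hG, bil_mul_right, bil_wv n hn hhom hndel, bil_pow_zero n (bil_ws n hn) p]
    ring
  -- the key induction
  have key : ∀ k : ℕ, Lop n (wPoly n ^ (k + 1) * G) =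
      C (2 * ((k : ℂ) + 1) * (2 * k + 2 * r + (d : ℂ) - 1)) * (wPoly n ^ k * G) := by
    intro k
    induction k with
    | zero =>
        rw [pow_one, Lop_mul, hLG, Lop_wPoly n hn, hbG, two_eq_C]
        trans (C ((2 * (d : ℂ) - 2) + 2 * (2 * (r : ℂ))) * (wPoly n ^ 0 * G))
        · rw [map_add, map_mul (C : ℂ →+* MvPolynomial (Fin d) ℂ) 2 (2 * (r : ℂ))]
          ring
        · exact congrArg (· * (wPoly n ^ 0 * G)) (congrArg C (by push_cast; ring))
    | succ k ih =>
        have hb : bil n (wPoly n) (wPoly n ^ (k + 1) * G) =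
            C (2 * (r : ℂ) + 4 * (((k + 1 : ℕ) : ℂ))) * (wPoly n ^ (k + 1) * G) := by
          rw [bil_mul_right, hbG, bil_self_pow, bil_ww n hn, smul_to_C]
          trans (C (2 * (r : ℂ)) * (wPoly n ^ (k + 1) * G) +
            (C (4 : ℂ) * C (((k + 1 : ℕ) : ℂ))) * (wPoly n ^ (k + 1) * G))
          · ring
          · rw [← map_mul (C : ℂ →+* MvPolynomial (Fin d) ℂ) 4 (((k + 1 : ℕ) : ℂ)),
              ← add_mul, ← map_add]
        rw [show wPoly n ^ (k + 1 + 1) * G = wPoly n * (wPoly n ^ (k + 1) * G) by ring,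
          Lop_mul, ih, Lop_wPoly n hn, hb, two_eq_C]
        trans (C ((2 * ((k : ℂ) + 1) * (2 * k + 2 * r + (d : ℂ) - 1)) +
            (2 * (d : ℂ) - 2) +
            2 * (2 * (r : ℂ) + 4 * (((k + 1 : ℕ) : ℂ)))) * (wPoly n ^ (k + 1) * G))
        · conv_rhs => rw [map_add, map_add,
            map_mul (C : ℂ →+* MvPolynomial (Fin d) ℂ) 2
              (2 * (r : ℂ) + 4 * (((k + 1 : ℕ) : ℂ)))]
          ring
        · exact congrArg (· * (wPoly n ^ (k + 1) * G)) (congrArg C (by push_cast; ring))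
  have hcast : ((2 * (q + 1) * (2 * q + 2 * r + d - 1) : ℕ) : ℂ) =
      2 * ((q : ℂ) + 1) * (2 * q + 2 * r + (d : ℂ) - 1) := by
    have h3 : 2 * q + 2 * r + d - 1 = 2 * q + 2 * r + (d - 1) := by omega
    rw [h3]
    push_cast [Nat.cast_sub hd]
    ring
  have hmain : Lop n (wPoly n ^ (q + 1) * sPoly n ^ p * υ) =
      C ((2 * (q + 1) * (2 * q + 2 * r + d - 1) : ℕ) : ℂ) *
        (sPoly n ^ p * wPoly n ^ q * υ) := by
    rw [mul_assoc, ← hG, key q, hcast, hG]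
    ring
  refine ⟨hmain, fun hne => ?_⟩
  have hNzero : (2 * (q + 1) * (2 * q + 2 * r + d - 1) : ℕ) ≠ 0 :=
    Nat.mul_ne_zero (by positivity) hne
  have hczero : ((2 * (q + 1) * (2 * q + 2 * r + d - 1) : ℕ) : ℂ) ≠ 0 :=
    Nat.cast_ne_zero.mpr hNzero
  refine ⟨C ((((2 * (q + 1) * (2 * q + 2 * r + d - 1) : ℕ) : ℂ))⁻¹) *
    (wPoly n ^ (q + 1) * sPoly n ^ p * υ), ?_⟩
  show Lop n (C ((((2 * (q + 1) * (2 * q + 2 * r + d - 1) : ℕ) : ℂ))⁻¹) *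
    (wPoly n ^ (q + 1) * sPoly n ^ p * υ)) = sPoly n ^ p * wPoly n ^ q * υ
  rw [Lop_C_mul, hmain, ← mul_assoc, ← map_mul, inv_mul_cancel₀ hczero, map_one, one_mul]
end
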